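/- arXiv:2007.04880 — 2 statements merged into one kernel-verified Lean document; each statement's English description precedes it below -/
import Mathlib

section
/- Let S ⊆ ℤ^n be nonempty with conv(S) ∩ ℤ^n = S and conv(S) = conv{v^1,…,v^g} + cone{r^1,…,r^h} for integer vectors v^i, r^j, where cone{r^1,…,r^h} is pointed, cone{r^1,…,r^h} ⊆ {0} × ℝ^{n_2}, n_1 = n − n_2, and conv(S) ⊆ cone{e^1,…,e^{n_1}, r^1,…,r^h}. Let P↓ = {x ∈ ℝ^n : Ax ≤ b} with A ∈ ℤ^{m×n}, b ∈ ℤ^m, m ≥ 1, satisfying Ax ≥ 0 for all x ∈ {e^1,…,e^{n_1}, r^1,…,r^h} and b ≥ 0. Let M* be a positive integer and Π := {(α,β) ∈ Π_{P↓} : β/(αr^j) ≤ M* for all j ∈ r-supp(α)}. Then P↓_{S,Π} is a rational polyhedron. -/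
open scoped Classical Pointwise

/-- Coercion of an integer vector to a real vector. -/
def coeZR {n : ℕ} (z : Fin n → ℤ) : Fin n → ℝ := fun i => (z i : ℝ)

/-- Dot product of an integer coefficient vector with a real vector. -/
def dotIR {n : ℕ} (a : Fin n → ℤ) (x : Fin n → ℝ) : ℝ := ∑ i, (a i : ℝ) * x i

/-- A rational polyhedron in `ℝ^n`. -/
def IsRatPolyhedron {n : ℕ} (P : Set (Fin n → ℝ)) : Prop :=
  ∃ (m : ℕ) (C : Matrix (Fin m) (Fin n) ℚ) (d : Fin m → ℚ),
    P = {x | ∀ i, ∑ j, (C i j : ℝ) * x j ≤ (d i : ℝ)}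

/-- `⌊β⌋_{S,α} = max {αz : z ∈ S, αz ≤ β}`. -/
noncomputable def floorS {n : ℕ} (S : Set (Fin n → ℤ)) (a : Fin n → ℤ) (β : ℝ) : ℝ :=
  sSup {t : ℝ | ∃ z ∈ S, dotIR a (coeZR z) = t ∧ t ≤ β}

/-- `⌈β⌉_{S,α} = min {αz : z ∈ S, αz ≥ β}`. -/
noncomputable def ceilS {n : ℕ} (S : Set (Fin n → ℤ)) (a : Fin n → ℤ) (β : ℝ) : ℝ :=
  sInf {t : ℝ | ∃ z ∈ S, dotIR a (coeZR z) = t ∧ β ≤ t}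

/-- Points satisfying the S-CG cut `αx ≤ ⌊β⌋_{S,α}` derived from `αx ≤ β`
(the cut is `0x ≤ -1`, i.e. the empty set, if no `z ∈ S` satisfies `αz ≤ β`). -/
noncomputable def cutLe {n : ℕ} (S : Set (Fin n → ℤ)) (a : Fin n → ℤ) (β : ℝ) :
    Set (Fin n → ℝ) :=
  if ∃ z ∈ S, dotIR a (coeZR z) ≤ β then {x | dotIR a x ≤ floorS S a β} else ∅

/-- Points satisfying the S-CG cut `αx ≥ ⌈β⌉_{S,α}` derived from `αx ≥ β`. -/
noncomputable def cutGe {n : ℕ} (S : Set (Fin n → ℤ)) (a : Fin n → ℤ) (β : ℝ) :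
    Set (Fin n → ℝ) :=
  if ∃ z ∈ S, β ≤ dotIR a (coeZR z) then {x | ceilS S a β ≤ dotIR a x} else ∅

/-- `Π_P` for `P = {x : Ax ≤ b}`: pairs `(λA, λb)` with `λ ≥ 0`, `λA` integral and
`λb = max {λAx : x ∈ P}`. -/
def PiLe {n m : ℕ} (A : Matrix (Fin m) (Fin n) ℤ) (b : Fin m → ℤ) (P : Set (Fin n → ℝ)) :
    Set ((Fin n → ℤ) × ℝ) :=
  {p | ∃ lam : Fin m → ℝ, (∀ i, 0 ≤ lam i)
      ∧ (∀ j, (p.1 j : ℝ) = ∑ i, lam i * (A i j : ℝ))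
      ∧ (p.2 = ∑ i, lam i * (b i : ℝ))
      ∧ IsGreatest {t : ℝ | ∃ x ∈ P, dotIR p.1 x = t} p.2}

/-- `Π_{P↑}` for `P↑ = {x : Ax ≥ b}`: pairs `(λA, λb)` with `λ ≥ 0`, `λA` integral and
`λb = min {λAx : x ∈ P↑}`. -/
def PiGe {n m : ℕ} (A : Matrix (Fin m) (Fin n) ℤ) (b : Fin m → ℤ) (P : Set (Fin n → ℝ)) :
    Set ((Fin n → ℤ) × ℝ) :=
  {p | ∃ lam : Fin m → ℝ, (∀ i, 0 ≤ lam i)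
      ∧ (∀ j, (p.1 j : ℝ) = ∑ i, lam i * (A i j : ℝ))
      ∧ (p.2 = ∑ i, lam i * (b i : ℝ))
      ∧ IsLeast {t : ℝ | ∃ x ∈ P, dotIR p.1 x = t} p.2}

/-- `P_{S,Ω}` : intersection of the S-CG cuts `αx ≤ ⌊β⌋_{S,α}` over `(α,β) ∈ Ω`. -/
noncomputable def closLe {n : ℕ} (S : Set (Fin n → ℤ)) (Om : Set ((Fin n → ℤ) × ℝ)) :
    Set (Fin n → ℝ) :=
  ⋂ p ∈ Om, cutLe S p.1 p.2

/-- `P↑_{S,Ω}` : intersection of the S-CG cuts `αx ≥ ⌈β⌉_{S,α}` over `(α,β) ∈ Ω`. -/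
noncomputable def closGe {n : ℕ} (S : Set (Fin n → ℤ)) (Om : Set ((Fin n → ℤ) × ℝ)) :
    Set (Fin n → ℝ) :=
  ⋂ p ∈ Om, cutGe S p.1 p.2

/-- The cone generated by a finite family of vectors. -/
def coneOf {n : ℕ} {ι : Type} [Fintype ι] (w : ι → Fin n → ℝ) : Set (Fin n → ℝ) :=
  {x | ∃ c : ι → ℝ, (∀ j, 0 ≤ c j) ∧ x = ∑ j, c j • w j}

/-- The unit vectors `e^1, …, e^{n₁}` of `ℝ^{n₁} × {0}` inside `ℝ^n`. -/
def unitVecs {n : ℕ} (n₁ : ℕ) : Fin n₁ → Fin n → ℝ :=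
  fun i j => if (j : ℕ) = (i : ℕ) then 1 else 0

/-- The recession cone of a subset of `ℝ^n`. -/
def recCone {n : ℕ} (P : Set (Fin n → ℝ)) : Set (Fin n → ℝ) :=
  {r | ∀ x ∈ P, ∀ t : ℝ, 0 ≤ t → x + t • r ∈ P}

/-- The lineality space of a subset of `ℝ^n`. -/
def linealitySp {n : ℕ} (P : Set (Fin n → ℝ)) : Set (Fin n → ℝ) :=
  {r | ∀ x ∈ P, ∀ t : ℝ, x + t • r ∈ P}

/-- The recession cone of a subset of `ℝ^n × ℝ`. -/
def recConePair {n : ℕ} (H : Set ((Fin n → ℝ) × ℝ)) : Set ((Fin n → ℝ) × ℝ) :=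
  {r | ∀ p ∈ H, ∀ t : ℝ, 0 ≤ t → p + t • r ∈ H}

/-- A rational polyhedron in `ℝ^n × ℝ`. -/
def IsRatPolyhedronPair {n : ℕ} (H : Set ((Fin n → ℝ) × ℝ)) : Prop :=
  ∃ (m : ℕ) (C : Matrix (Fin m) (Fin n) ℚ) (c d : Fin m → ℚ),
    H = {p | ∀ i, ∑ j, (C i j : ℝ) * p.1 j + (c i : ℝ) * p.2 ≤ (d i : ℝ)}

/-- Auxiliary sequence: `MseqAux c M1 k = (M_{k+1}, M_1 ⋯ M_{k+1})` where `M_1 = M1` and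
`M_i = (c · M_1 ⋯ M_{i-1})^{i-1} · M_1` for `i ≥ 2` (with `c = 2mB`). -/
def MseqAux (c M1 : ℤ) : ℕ → ℤ × ℤ
  | 0 => (M1, M1)
  | k + 1 =>
      let p := (MseqAux c M1 k).2
      let next := (c * p) ^ (k + 1) * M1
      (next, p * next)

/-- `Mseq c M1 k = M_{k+1}`. -/
def Mseq (c M1 : ℤ) (k : ℕ) : ℤ := (MseqAux c M1 k).1

/-- `M = M_1 ⋯ M_{m-1}` if `m ≥ 2`, and `M = 1` if `m = 1`, where
`M_1 = 2(mB + 2D)` and `M_i = (2mB · M_1 ⋯ M_{i-1})^{i-1} · M_1`. -/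
def bigM (m : ℕ) (B D : ℤ) : ℤ :=
  ∏ k ∈ Finset.range (m - 1), Mseq (2 * (m : ℤ) * B) (2 * ((m : ℤ) * B + 2 * D)) k

/-- `⌊β⌋_{S,α}` for a mixed-integer set `S ⊆ ℤ^n × ℝ^l`. -/
noncomputable def floorMix {n l : ℕ} (S : Set ((Fin n → ℤ) × (Fin l → ℝ)))
    (a : Fin n → ℤ) (β : ℝ) : ℝ :=
  sSup {t : ℝ | ∃ p ∈ S, dotIR a (coeZR p.1) = t ∧ t ≤ β}

/-- Points of `ℝ^n × ℝ^l` satisfying the S-CG cut `αx ≤ ⌊β⌋_{S,α}` for a mixed-integer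
set `S` (the cut is `0x ≤ -1` if no `(x,y) ∈ S` satisfies `αx ≤ β`). -/
noncomputable def cutMix {n l : ℕ} (S : Set ((Fin n → ℤ) × (Fin l → ℝ)))
    (a : Fin n → ℤ) (β : ℝ) : Set ((Fin n → ℝ) × (Fin l → ℝ)) :=
  if ∃ p ∈ S, dotIR a (coeZR p.1) ≤ β then {q | dotIR a q.1 ≤ floorMix S a β} else ∅

/-- A rational polyhedron in `ℝ^n × ℝ^l`. -/
def IsRatPolyhedronProd {n l : ℕ} (P : Set ((Fin n → ℝ) × (Fin l → ℝ))) : Prop :=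
  ∃ (m : ℕ) (A : Matrix (Fin m) (Fin n) ℚ) (C : Matrix (Fin m) (Fin l) ℚ) (d : Fin m → ℚ),
    P = {p | ∀ i, ∑ j, (A i j : ℝ) * p.1 j + ∑ j, (C i j : ℝ) * p.2 j ≤ (d i : ℝ)}

namespace SCGaux

/-- cast of a rational vector to a real vector -/
def cQ {m : ℕ} (v : Fin m → ℚ) : Fin m → ℝ := fun t => (v t : ℝ)

/-- dot of rational (row) vector with a real vector -/
def rdot {m : ℕ} (u : Fin m → ℚ) (x : Fin m → ℝ) : ℝ := ∑ i, (u i : ℝ) * x i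

/-- rational dot -/
def dq {m : ℕ} (u v : Fin m → ℚ) : ℚ := ∑ i, u i * v i

lemma rdot_cQ {m : ℕ} (u v : Fin m → ℚ) : rdot u (cQ v) = (dq u v : ℚ) := by
  simp [rdot, cQ, dq]

lemma cQ_add {m : ℕ} (u v : Fin m → ℚ) : cQ (u + v) = cQ u + cQ v := by
  funext t; simp [cQ]

lemma cQ_smul {m : ℕ} (a : ℚ) (u : Fin m → ℚ) : cQ (a • u) = (a : ℝ) • cQ u := by
  funext t; simp [cQ]

lemma cQ_zero {m : ℕ} : cQ (0 : Fin m → ℚ) = 0 := by funext t; simp [cQ]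

lemma cQ_sub {m : ℕ} (u v : Fin m → ℚ) : cQ (u - v) = cQ u - cQ v := by
  funext t; simp [cQ]

lemma rdot_add {m : ℕ} (u : Fin m → ℚ) (x y : Fin m → ℝ) :
    rdot u (x + y) = rdot u x + rdot u y := by
  simp [rdot, mul_add, Finset.sum_add_distrib]

lemma rdot_smul {m : ℕ} (u : Fin m → ℚ) (a : ℝ) (x : Fin m → ℝ) :
    rdot u (a • x) = a * rdot u x := by
  simp only [rdot, Pi.smul_apply, smul_eq_mul, Finset.mul_sum]
  exact Finset.sum_congr rfl fun i _ => by ring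

lemma rdot_sum {m : ℕ} {ι : Type*} (s : Finset ι) (u : Fin m → ℚ) (f : ι → Fin m → ℝ) :
    rdot u (∑ a ∈ s, f a) = ∑ a ∈ s, rdot u (f a) := by
  classical
  induction s using Finset.induction with
  | empty => simp [rdot]
  | insert _ _ h ih => rw [Finset.sum_insert h, rdot_add, ih, Finset.sum_insert h]

lemma zero_mem_coneOf {n : ℕ} {ι : Type} [Fintype ι] (w : ι → Fin n → ℝ) :
    (0 : Fin n → ℝ) ∈ coneOf w :=
  ⟨0, fun _ => le_refl 0, by simp⟩

lemma mem_coneOf_self {n : ℕ} {ι : Type} [Fintype ι] (w : ι → Fin n → ℝ) (a : ι) :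
    w a ∈ coneOf w := by
  classical
  refine ⟨fun b => if b = a then 1 else 0, fun b => by positivity, ?_⟩
  have : ∀ j : ι, (fun b => if b = a then (1:ℝ) else 0) j • w j = if j = a then w j else 0 :=
    fun j => by by_cases hj : j = a <;> simp [hj]
  rw [Finset.sum_congr rfl (fun j _ => this j), Finset.sum_ite_eq' Finset.univ a w]
  simp

lemma add_mem_coneOf {n : ℕ} {ι : Type} [Fintype ι] {w : ι → Fin n → ℝ} {x y : Fin n → ℝ}
    (hx : x ∈ coneOf w) (hy : y ∈ coneOf w) : x + y ∈ coneOf w := by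
  obtain ⟨c, hc, rfl⟩ := hx; obtain ⟨d, hd, rfl⟩ := hy
  exact ⟨c + d, fun j => add_nonneg (hc j) (hd j), by
    rw [← Finset.sum_add_distrib]; exact Finset.sum_congr rfl fun j _ => (add_smul (c j) (d j) (w j)).symm⟩

lemma smul_mem_coneOf {n : ℕ} {ι : Type} [Fintype ι] {w : ι → Fin n → ℝ} {x : Fin n → ℝ}
    {a : ℝ} (ha : 0 ≤ a) (hx : x ∈ coneOf w) : a • x ∈ coneOf w := by
  obtain ⟨c, hc, rfl⟩ := hx
  exact ⟨fun j => a * c j, fun j => mul_nonneg ha (hc j), by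
    rw [Finset.smul_sum]; exact Finset.sum_congr rfl fun j _ => (mul_smul a (c j) (w j)).symm⟩

lemma sum_mem_coneOf {n : ℕ} {ι : Type} {κ : Type*} [Fintype ι] {w : ι → Fin n → ℝ}
    (s : Finset κ) (f : κ → Fin n → ℝ) (hf : ∀ a ∈ s, f a ∈ coneOf w) :
    (∑ a ∈ s, f a) ∈ coneOf w := by
  classical
  induction s using Finset.induction with
  | empty => simpa using zero_mem_coneOf w
  | insert _ _ h ih =>
      rw [Finset.sum_insert h]
      exact add_mem_coneOf (hf _ (Finset.mem_insert_self _ _))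
        (ih fun a ha => hf a (Finset.mem_insert_of_mem ha))

lemma coneOf_comp_equiv {n : ℕ} {ι ι' : Type} [Fintype ι] [Fintype ι']
    (w : ι → Fin n → ℝ) (e : ι' ≃ ι) : coneOf w = coneOf (w ∘ e) := by
  ext x
  constructor
  · rintro ⟨c, hc, rfl⟩
    exact ⟨c ∘ e, fun j => hc _, by rw [← Equiv.sum_comp e (fun j => c j • w j)]; rfl⟩
  · rintro ⟨c, hc, rfl⟩
    refine ⟨c ∘ e.symm, fun j => hc _, ?_⟩
    rw [← Equiv.sum_comp e (fun j => (c ∘ e.symm) j • w j)]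
    exact Finset.sum_congr rfl fun j _ => by simp

end SCGaux

namespace SCGaux

lemma rdot_sub {m : ℕ} (u : Fin m → ℚ) (x y : Fin m → ℝ) :
    rdot u (x - y) = rdot u x - rdot u y := by
  simp [rdot, mul_sub, Finset.sum_sub_distrib]

lemma dd_sub_aux {m s : ℕ} (v : Fin s → Fin m → ℚ) (g : Fin m → ℚ)
    (W : (Fin s ⊕ Fin s × Fin s) → Fin m → ℚ)
    (hWl : ∀ a, W (Sum.inl a) = if dq g (v a) ≤ 0 then v a else 0)
    (hWr : ∀ p : Fin s × Fin s, W (Sum.inr p) =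
      if 0 < dq g (v p.1) ∧ dq g (v p.2) < 0
      then (dq g (v p.1)) • v p.2 - (dq g (v p.2)) • v p.1 else 0) :
    ∀ (N : ℕ) (c : Fin s → ℝ), (Finset.univ.filter fun a => c a ≠ 0).card ≤ N →
    (∀ a, 0 ≤ c a) → rdot g (∑ a, c a • cQ (v a)) ≤ 0 →
    (∑ a, c a • cQ (v a)) ∈ coneOf (fun u => cQ (W u)) := by
  classical
  intro N
  induction N with
  | zero =>
      intro c hcard hc _
      have hall : ∀ a, c a = 0 := by
        intro a
        by_contra hne
        have : a ∈ Finset.univ.filter fun a => c a ≠ 0 := by simp [hne]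
        have := Finset.card_pos.mpr ⟨a, this⟩
        omega
      have : (∑ a, c a • cQ (v a)) = 0 := by
        refine Finset.sum_eq_zero fun a _ => by rw [hall a, zero_smul]
      rw [this]; exact zero_mem_coneOf _
  | succ N ih =>
      intro c hcard hc hg
      by_cases hP : ∃ a, c a ≠ 0 ∧ 0 < dq g (v a)
      · obtain ⟨j, hcj, hdj⟩ := hP
        have hcjpos : 0 < c j := lt_of_le_of_ne (hc j) (Ne.symm hcj)
        have hsum : (∑ a, c a * ((dq g (v a) : ℚ) : ℝ)) ≤ 0 := by
          have : rdot g (∑ a, c a • cQ (v a)) = ∑ a, c a * ((dq g (v a) : ℚ) : ℝ) := by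
            rw [rdot_sum]
            exact Finset.sum_congr rfl fun a _ => by rw [rdot_smul, rdot_cQ]
          rwa [this] at hg
        have hex : ∃ i, c i * ((dq g (v i) : ℚ) : ℝ) < 0 := by
          by_contra hno
          push_neg at hno
          have hj' : (0:ℝ) < c j * ((dq g (v j) : ℚ) : ℝ) := by
            apply mul_pos hcjpos
            exact_mod_cast hdj
          have hle := Finset.single_le_sum (f := fun a => c a * ((dq g (v a) : ℚ) : ℝ))
            (fun a _ => hno a) (Finset.mem_univ j)
          linarith
        obtain ⟨i, hi⟩ := hex
        have hcipos : 0 < c i := by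
          rcases lt_trichotomy (c i) 0 with h|h|h
          · exact absurd h (not_lt.mpr (hc i))
          · rw [h] at hi; simp at hi
          · exact h
        have hdi : dq g (v i) < 0 := by
          by_contra hdi'
          push_neg at hdi'
          have : (0:ℝ) ≤ c i * ((dq g (v i) : ℚ) : ℝ) :=
            mul_nonneg (hc i) (by exact_mod_cast hdi')
          linarith
        have hij : i ≠ j := fun h => by rw [h] at hdi; exact absurd hdj (not_lt.mpr hdi.le)
        set p : ℝ := ((dq g (v j) : ℚ) : ℝ) with hp
        set q : ℝ := ((dq g (v i) : ℚ) : ℝ) with hq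
        have hppos : 0 < p := by rw [hp]; exact_mod_cast hdj
        have hqneg : q < 0 := by rw [hq]; exact_mod_cast hdi
        set θ : ℝ := min (c i / p) (c j / (-q)) with hθ
        have hθpos : 0 < θ := lt_min (div_pos hcipos hppos) (div_pos hcjpos (by linarith))
        set wvec : Fin m → ℝ := p • cQ (v i) - q • cQ (v j) with hwvec
        have hwW : wvec = cQ (W (Sum.inr (j, i))) := by
          rw [hWr (j, i), if_pos ⟨hdj, hdi⟩, cQ_sub, cQ_smul, cQ_smul, hwvec, hp, hq]
        set c'' : Fin s → ℝ :=
          Function.update (Function.update c i (c i - θ * p)) j (c j + θ * q) with hc''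
        have hc''i : c'' i = c i - θ * p := by
          rw [hc'', Function.update_of_ne hij, Function.update_self]
        have hc''j : c'' j = c j + θ * q := by rw [hc'', Function.update_self]
        have hc''other : ∀ a, a ≠ i → a ≠ j → c'' a = c a := fun a hai haj => by
          rw [hc'', Function.update_of_ne haj, Function.update_of_ne hai]
        have hc''nonneg : ∀ a, 0 ≤ c'' a := by
          intro a
          by_cases hai : a = i
      
        
        
          · subst hai
            rw [hc''i]
            have h1 : θ * p ≤ (c a / p) * p :=
              mul_le_mul_of_nonneg_right (min_le_left _ _) hppos.le
            rw [div_mul_cancel₀ (c a) (ne_of_gt hppos)] at h1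
            linarith
          by_cases haj : a = j
          · subst haj
            rw [hc''j]
            have h1 : θ * (-q) ≤ (c a / (-q)) * (-q) :=
              mul_le_mul_of_nonneg_right (min_le_right _ _) (by linarith)
            rw [div_mul_cancel₀ (c a) (by linarith : -q ≠ 0)] at h1
            linarith
          · rw [hc''other a hai haj]; exact hc a
        have hsum'' : (∑ a, c'' a • cQ (v a)) = (∑ a, c a • cQ (v a)) - θ • wvec := by
          have expand : ∀ (f : Fin s → ℝ) (b : Fin s) (y : ℝ),
              (∑ a, Function.update f b y a • cQ (v a))
                = (∑ a, f a • cQ (v a)) + (y - f b) • cQ (v b) := by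
            intro f b y
            have hterm : ∀ a, Function.update f b y a • cQ (v a)
                = f a • cQ (v a) + (if a = b then (y - f b) • cQ (v b) else 0) := by
              intro a
              by_cases hab : a = b
              · subst hab; rw [Function.update_self, if_pos rfl, ← add_smul]; ring_nf
              · rw [Function.update_of_ne hab, if_neg hab, add_zero]
            rw [Finset.sum_congr rfl fun a _ => hterm a, Finset.sum_add_distrib,
              Finset.sum_ite_eq' Finset.univ b]
            simp
          rw [hc'', expand, expand]
          rw [Function.update_of_ne (Ne.symm hij), hwvec]
          match_scalars <;> ring
        have hkill : c'' i = 0 ∨ c'' j = 0 := by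
          rcases le_total (c i / p) (c j / (-q)) with hle | hle
          · left
            rw [hc''i, hθ, min_eq_left hle, div_mul_cancel₀ (c i) (ne_of_gt hppos)]
            ring
          · right
            rw [hc''j, hθ, min_eq_right hle]
            have h3 : c j / -q * -q = c j := div_mul_cancel₀ (c j) (by linarith)
            nlinarith [h3]
        obtain ⟨k, hck0, hckmem⟩ : ∃ k, c'' k = 0 ∧ c k ≠ 0 := by
          rcases hkill with h | h
          · exact ⟨i, h, ne_of_gt hcipos⟩
          · exact ⟨j, h, hcj⟩
        have hsubset : (Finset.univ.filter fun a => c'' a ≠ 0)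
            ⊆ (Finset.univ.filter fun a => c a ≠ 0).erase k := by
          intro a ha
          simp only [Finset.mem_filter, Finset.mem_univ, true_and] at ha
          have hak : a ≠ k := fun h => by rw [h, hck0] at ha; exact ha rfl
          refine Finset.mem_erase.mpr ⟨hak, ?_⟩
          simp only [Finset.mem_filter, Finset.mem_univ, true_and]
          by_cases hai : a = i
          · subst hai; exact ne_of_gt hcipos
          by_cases haj : a = j
          · subst haj; exact hcj
          · rwa [hc''other a hai haj] at ha
        have hcard'' : (Finset.univ.filter fun a => c'' a ≠ 0).card ≤ N := by
          have h1 := Finset.card_le_card hsubset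
          have hkmem : k ∈ (Finset.univ.filter fun a => c a ≠ 0) := by simp [hckmem]
          have h2 := Finset.card_erase_of_mem hkmem
          omega
        have hgw : rdot g wvec = 0 := by
          rw [hwvec, rdot_sub, rdot_smul, rdot_smul, rdot_cQ, rdot_cQ, hp, hq]; ring
        have hg'' : rdot g (∑ a, c'' a • cQ (v a)) ≤ 0 := by
          rw [hsum'', rdot_sub, rdot_smul, hgw]
          simpa using hg
        have hmem'' := ih c'' hcard'' hc''nonneg hg''
        have hfin : (∑ a, c a • cQ (v a))
            = (∑ a, c'' a • cQ (v a)) + θ • cQ (W (Sum.inr (j, i))) := by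
          rw [hsum'', ← hwW]; abel
        rw [hfin]
        exact add_mem_coneOf hmem''
          (smul_mem_coneOf hθpos.le (mem_coneOf_self (fun u => cQ (W u)) (Sum.inr (j, i))))
      · push_neg at hP
        refine ⟨Sum.elim c (fun _ => 0), fun u => by cases u with
          | inl a => exact hc a
          | inr p => exact le_refl 0, ?_⟩
        rw [Fintype.sum_sum_type]
        simp only [Sum.elim_inl, Sum.elim_inr, zero_smul, Finset.sum_const_zero, add_zero]
        refine Finset.sum_congr rfl fun a _ => ?_
        by_cases hca : c a = 0
        · rw [hca, zero_smul, zero_smul]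
        · have hle : dq g (v a) ≤ 0 := hP a hca
          rw [hWl a, if_pos hle]

end SCGaux

namespace SCGaux

lemma dq_sub {m : ℕ} (u x y : Fin m → ℚ) : dq u (x - y) = dq u x - dq u y := by
  simp [dq, mul_sub, Finset.sum_sub_distrib]

lemma dq_smul {m : ℕ} (u : Fin m → ℚ) (a : ℚ) (x : Fin m → ℚ) :
    dq u (a • x) = a * dq u x := by
  simp only [dq, Pi.smul_apply, smul_eq_mul, Finset.mul_sum]
  exact Finset.sum_congr rfl fun i _ => by ring

theorem dd_step {m s : ℕ} (v : Fin s → Fin m → ℚ) (g : Fin m → ℚ) :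
    ∃ (s' : ℕ) (w : Fin s' → Fin m → ℚ),
      (coneOf (fun a => cQ (v a)) ∩ {x | rdot g x ≤ 0}) = coneOf (fun a => cQ (w a)) := by
  classical
  set W : (Fin s ⊕ Fin s × Fin s) → Fin m → ℚ :=
    Sum.elim (fun a => if dq g (v a) ≤ 0 then v a else 0)
      (fun p => if 0 < dq g (v p.1) ∧ dq g (v p.2) < 0
        then (dq g (v p.1)) • v p.2 - (dq g (v p.2)) • v p.1 else 0) with hW
  have hWl : ∀ a, W (Sum.inl a) = if dq g (v a) ≤ 0 then v a else 0 := fun a => rfl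
  have hWr : ∀ p : Fin s × Fin s, W (Sum.inr p) =
      if 0 < dq g (v p.1) ∧ dq g (v p.2) < 0
      then (dq g (v p.1)) • v p.2 - (dq g (v p.2)) • v p.1 else 0 := fun p => rfl
  have hmain : (coneOf (fun a => cQ (v a)) ∩ {x | rdot g x ≤ 0})
      = coneOf (fun u => cQ (W u)) := by
    apply Set.Subset.antisymm
    · rintro x ⟨⟨c, hc, rfl⟩, hx⟩
      exact dd_sub_aux v g W hWl hWr _ c (le_refl _) hc hx
    · rintro x ⟨c, hc, rfl⟩
      constructor
      · refine sum_mem_coneOf _ _ fun u _ => ?_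
        refine smul_mem_coneOf (hc u) ?_
        dsimp only
        cases u with
        | inl a =>
            rw [hWl a]
            by_cases hle : dq g (v a) ≤ 0
            · rw [if_pos hle]; exact mem_coneOf_self _ a
            · rw [if_neg hle, cQ_zero]; exact zero_mem_coneOf _
        | inr p =>
            rw [hWr p]
            by_cases hcond : 0 < dq g (v p.1) ∧ dq g (v p.2) < 0
            · rw [if_pos hcond]
              have : cQ ((dq g (v p.1)) • v p.2 - (dq g (v p.2)) • v p.1)
                  = ((dq g (v p.1) : ℚ) : ℝ) • cQ (v p.2)
                    + (-(dq g (v p.2) : ℚ) : ℝ) • cQ (v p.1) := by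
                rw [cQ_sub, cQ_smul, cQ_smul]
                push_cast
                module
              rw [this]
              refine add_mem_coneOf (smul_mem_coneOf ?_ (mem_coneOf_self _ p.2))
                (smul_mem_coneOf ?_ (mem_coneOf_self _ p.1))
              · exact_mod_cast hcond.1.le
              · rw [neg_nonneg]; exact_mod_cast hcond.2.le
            · rw [if_neg hcond, cQ_zero]; exact zero_mem_coneOf _
      · show rdot g _ ≤ 0
        rw [rdot_sum]
        refine Finset.sum_nonpos fun u _ => ?_
        rw [rdot_smul]
        refine mul_nonpos_of_nonneg_of_nonpos (hc u) ?_
        rw [rdot_cQ]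
        cases u with
        | inl a =>
            rw [hWl a]
            by_cases hle : dq g (v a) ≤ 0
            · rw [if_pos hle]; exact_mod_cast hle
            · rw [if_neg hle]; simp [dq]
        | inr p =>
            rw [hWr p]
            by_cases hcond : 0 < dq g (v p.1) ∧ dq g (v p.2) < 0
            · rw [if_pos hcond]
              have : dq g ((dq g (v p.1)) • v p.2 - (dq g (v p.2)) • v p.1) = 0 := by
                rw [dq_sub, dq_smul, dq_smul]; ring
              rw [this]; simp
            · rw [if_neg hcond]; simp [dq]
  -- reindex to Fin
  obtain ⟨e⟩ : Nonempty ((Fin s ⊕ Fin s × Fin s) ≃ Fin (Fintype.card (Fin s ⊕ Fin s × Fin s))) :=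
    ⟨Fintype.equivFin _⟩
  refine ⟨_, fun a => W (e.symm a), ?_⟩
  rw [hmain, coneOf_comp_equiv (fun u => cQ (W u)) e.symm]
  rfl

theorem minkowski {m : ℕ} : ∀ {k : ℕ} (G : Fin k → Fin m → ℚ),
    ∃ (s : ℕ) (v : Fin s → Fin m → ℚ),
      {x : Fin m → ℝ | ∀ i, rdot (G i) x ≤ 0} = coneOf (fun a => cQ (v a)) := by
  intro k
  induction k with
  | zero =>
      intro G
      -- the set is all of ℝ^m ; generators ± unit vectors
      set V : (Fin m ⊕ Fin m) → Fin m → ℚ :=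
        Sum.elim (fun i => fun t => if t = i then 1 else 0)
          (fun i => fun t => if t = i then -1 else 0) with hV
      have huniv : {x : Fin m → ℝ | ∀ i : Fin 0, rdot (G i) x ≤ 0} = coneOf (fun u => cQ (V u)) := by
        apply Set.Subset.antisymm
        · intro x _
          refine ⟨Sum.elim (fun i => max (x i) 0) (fun i => max (-x i) 0),
            fun u => by cases u <;> exact le_max_right _ _, ?_⟩
          rw [Fintype.sum_sum_type]
          funext t
          simp only [Pi.add_apply, Finset.sum_apply, Pi.smul_apply, Sum.elim_inl, Sum.elim_inr,
            smul_eq_mul, hV, cQ]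
          rw [Finset.sum_eq_single t (fun b _ hbt => by simp [Ne.symm hbt]) (by simp),
            Finset.sum_eq_single t (fun b _ hbt => by simp [Ne.symm hbt]) (by simp)]
          simp only [if_pos rfl]
          push_cast
          rcases le_total (x t) 0 with h | h
          · rw [max_eq_right h, max_eq_left (by linarith)]; ring
          · rw [max_eq_left h, max_eq_right (by linarith)]; ring
        · intro x _
          intro i
          exact absurd i.2 (by omega)
      obtain ⟨e⟩ : Nonempty ((Fin m ⊕ Fin m) ≃ Fin (Fintype.card (Fin m ⊕ Fin m))) :=
        ⟨Fintype.equivFin _⟩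
      refine ⟨_, fun a => V (e.symm a), ?_⟩
      rw [huniv, coneOf_comp_equiv (fun u => cQ (V u)) e.symm]
      rfl
  | succ k ih =>
      intro G
      obtain ⟨s, v, hv⟩ := ih (fun i => G i.succ)
      obtain ⟨s', w, hw⟩ := dd_step v (G 0)
      refine ⟨s', w, ?_⟩
      rw [← hw, ← hv]
      ext x
      simp only [Set.mem_setOf_eq, Set.mem_inter_iff]
      constructor
      · intro hx
        exact ⟨fun i => hx i.succ, hx 0⟩
      · rintro ⟨h1, h2⟩ i
        rcases Fin.eq_zero_or_eq_succ i with rfl | ⟨i', rfl⟩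
        · exact h2
        · exact h1 i'

end SCGaux

namespace SCGaux

lemma dotIR_add (a : Fin n → ℤ) (x y : Fin n → ℝ) : dotIR a (x + y) = dotIR a x + dotIR a y := by
  simp [dotIR, mul_add, Finset.sum_add_distrib]

lemma dotIR_sub (a : Fin n → ℤ) (x y : Fin n → ℝ) : dotIR a (x - y) = dotIR a x - dotIR a y := by
  simp [dotIR, mul_sub, Finset.sum_sub_distrib]

lemma dotIR_smul (a : Fin n → ℤ) (c : ℝ) (x : Fin n → ℝ) : dotIR a (c • x) = c * dotIR a x := by
  simp only [dotIR, Pi.smul_apply, smul_eq_mul, Finset.mul_sum]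
  exact Finset.sum_congr rfl fun i _ => by ring

lemma dotIR_sumv {ι : Type*} (a : Fin n → ℤ) (s : Finset ι) (f : ι → Fin n → ℝ) :
    dotIR a (∑ u ∈ s, f u) = ∑ u ∈ s, dotIR a (f u) := by
  classical
  induction s using Finset.induction with
  | empty => simp [dotIR]
  | insert _ _ h ih => rw [Finset.sum_insert h, dotIR_add, ih, Finset.sum_insert h]

lemma dot_swap {n m : ℕ} (A : Matrix (Fin m) (Fin n) ℤ) (lam : Fin m → ℝ) (α : Fin n → ℤ)
    (hα : ∀ j, (α j : ℝ) = ∑ i, lam i * (A i j : ℝ)) (x : Fin n → ℝ) :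
    dotIR α x = ∑ i, lam i * (∑ j, (A i j : ℝ) * x j) := by
  rw [dotIR]
  rw [Finset.sum_congr rfl fun j _ => by rw [hα j]]
  rw [Finset.sum_congr rfl fun j (_ : j ∈ Finset.univ) => Finset.sum_mul _ _ (x j)]
  rw [Finset.sum_comm]
  refine Finset.sum_congr rfl fun i _ => ?_
  rw [Finset.mul_sum]
  exact Finset.sum_congr rfl fun j _ => by ring

lemma floorS_cutLe_eq {n : ℕ} (S : Set (Fin n → ℤ)) (a : Fin n → ℤ) (β : ℝ) (zb : Fin n → ℤ)
    (hzb : zb ∈ S) (h1 : dotIR a (coeZR zb) ≤ β)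
    (h2 : ∀ z ∈ S, dotIR a (coeZR z) ≤ β → dotIR a (coeZR z) ≤ dotIR a (coeZR zb)) :
    cutLe S a β = {x | dotIR a x ≤ dotIR a (coeZR zb)} := by
  have hfl : floorS S a β = dotIR a (coeZR zb) := by
    apply IsGreatest.csSup_eq
    constructor
    · exact ⟨zb, hzb, rfl, h1⟩
    · rintro t ⟨z, hz, rfl, ht⟩
      exact h2 z hz ht
  rw [cutLe, if_pos ⟨zb, hzb, h1⟩, hfl]

lemma exists_int_scale {n : ℕ} (q : Fin n → ℚ) :
    ∃ (N : ℕ), 0 < N ∧ ∀ j, ∃ zj : ℤ, (zj : ℚ) = (N : ℚ) * q j := by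
  classical
  refine ⟨∏ j, (q j).den, Finset.prod_pos fun j _ => (q j).pos, fun j => ?_⟩
  obtain ⟨c, hc⟩ : ((q j).den : ℤ) ∣ (∏ j, (q j).den : ℕ) := by
    exact_mod_cast Int.natCast_dvd_natCast.mpr (Finset.dvd_prod_of_mem _ (Finset.mem_univ j))
  refine ⟨c * (q j).num, ?_⟩
  have hden : ((q j).den : ℚ) ≠ 0 := by exact_mod_cast (q j).den_nz
  have hq : (q j) = ((q j).num : ℚ) / ((q j).den : ℚ) := by exact_mod_cast (q j).num_div_den.symm
  have hNc : ((∏ j, (q j).den : ℕ) : ℚ) = ((q j).den : ℚ) * (c : ℚ) := by exact_mod_cast hc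
  have key : ((q j).num : ℚ) = q j * ((q j).den : ℚ) := by
    exact_mod_cast (Rat.mul_den_eq_num (q j)).symm
  calc ((c * (q j).num : ℤ) : ℚ) = (c : ℚ) * ((q j).num : ℚ) := by push_cast; ring
  _ = ((q j).den : ℚ) * (c : ℚ) * q j := by rw [key]; ring
  _ = ((∏ j, (q j).den : ℕ) : ℚ) * q j := by rw [← hNc]

lemma le_zero_of_forall_rat (a bnd : ℝ) (h : ∀ t : ℚ, 0 < t → a ≤ (t : ℝ) * bnd) : a ≤ 0 := by
  by_contra h'
  push_neg at h'
  rcases le_or_gt bnd 0 with hb | hb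
  · have := h 1 one_pos
    simp only [Rat.cast_one, one_mul] at this
    linarith
  · obtain ⟨t, ht0, ht1⟩ := exists_rat_btwn (show (0:ℝ) < a / (2 * bnd) by positivity)
    have ht0' : (0:ℚ) < t := by exact_mod_cast ht0
    have := h t ht0'
    have h2 : (t : ℝ) * bnd < (a / (2 * bnd)) * bnd := by
      exact mul_lt_mul_of_pos_right ht1 hb
    have h3 : (a / (2 * bnd)) * bnd = a / 2 := by field_simp
    linarith

lemma rat_approx_pos {s : ℕ} {κ : Type} [Fintype κ] (W : κ → Fin s → ℝ) (c : Fin s → ℝ)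
    (hc : ∀ a, 0 ≤ c a) (hpos : ∀ k, 0 < ∑ a, W k a * c a) :
    ∃ c' : Fin s → ℚ, (∀ a, 0 ≤ c' a) ∧ ∀ k, 0 < ∑ a, W k a * ((c' a : ℚ) : ℝ) := by
  classical
  rcases isEmpty_or_nonempty κ with hk | hk
  · refine ⟨fun a => 0, fun a => le_refl 0, fun k => (IsEmpty.false k).elim⟩
  · set mval : ℝ := Finset.univ.inf' (Finset.univ_nonempty) (fun k => ∑ a, W k a * c a) with hm
    have hmpos : 0 < mval := by
      rw [hm]
      rw [Finset.lt_inf'_iff]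
      exact fun k _ => hpos k
    set B : ℝ := (Finset.univ.sup' (Finset.univ_nonempty) (fun k => ∑ a, |W k a|)) with hB
    have hBk : ∀ k, (∑ a, |W k a|) ≤ B := fun k =>
      Finset.le_sup' (fun k => ∑ a, |W k a|) (Finset.mem_univ k)
    obtain ⟨k0⟩ := hk
    have hBnonneg : 0 ≤ B := le_trans (Finset.sum_nonneg fun a _ => abs_nonneg (W k0 a)) (hBk k0)
    have hεpos : 0 < mval / (2 * (B + 1)) := by positivity
    have hch : ∀ a : Fin s, ∃ ca : ℚ, c a < (ca : ℝ) ∧ (ca : ℝ) < c a + mval / (2 * (B + 1)) := by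
      intro a
      obtain ⟨ca, h1, h2⟩ := exists_rat_btwn (show c a < c a + mval / (2 * (B + 1)) by linarith)
      exact ⟨ca, h1, h2⟩
    choose c' hc'1 hc'2 using hch
    refine ⟨c', fun a => ?_, fun k => ?_⟩
    · by_contra hneg
      push_neg at hneg
      have h1 : ((c' a : ℚ) : ℝ) < 0 := by exact_mod_cast hneg
      linarith [hc'1 a, hc a]
    · have hdiff : ∀ a, |(c' a : ℝ) - c a| ≤ mval / (2 * (B + 1)) := by
        intro a
        rw [abs_le]
        constructor
        · linarith [hc'1 a, hεpos]
        · linarith [hc'2 a]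
      have hsplit : (∑ a, W k a * ((c' a : ℚ) : ℝ))
          = (∑ a, W k a * c a) + ∑ a, W k a * ((c' a : ℝ) - c a) := by
        rw [← Finset.sum_add_distrib]
        exact Finset.sum_congr rfl fun a _ => by ring
      have habs : |∑ a, W k a * ((c' a : ℝ) - c a)| ≤ B * (mval / (2 * (B + 1))) := by
        calc |∑ a, W k a * ((c' a : ℝ) - c a)| ≤ ∑ a, |W k a * ((c' a : ℝ) - c a)| :=
              Finset.abs_sum_le_sum_abs _ _
        _ ≤ ∑ a, |W k a| * (mval / (2 * (B + 1))) := by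
              refine Finset.sum_le_sum fun a _ => ?_
              rw [abs_mul]
              exact mul_le_mul_of_nonneg_left (hdiff a) (abs_nonneg _)
        _ = (∑ a, |W k a|) * (mval / (2 * (B + 1))) := by rw [Finset.sum_mul]
        _ ≤ B * (mval / (2 * (B + 1))) := by
              exact mul_le_mul_of_nonneg_right (hBk k) hεpos.le
      have hmk : mval ≤ ∑ a, W k a * c a := Finset.inf'_le _ (Finset.mem_univ k)
      have hfrac : B * (mval / (2 * (B + 1))) < mval := by
        rw [div_eq_mul_inv]
        have h1 : B * (mval * (2 * (B + 1))⁻¹) = mval * (B / (2 * (B + 1))) := by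
          field_simp
        rw [h1]
        have h2 : B / (2 * (B + 1)) < 1 := by
          rw [div_lt_one (by positivity)]
          linarith
        nlinarith
      rw [hsplit]
      have := abs_le.mp habs
      linarith

lemma convexHull_abs_le {n : ℕ} (F : Set (Fin n → ℝ)) (V : ℝ) (hF : ∀ x ∈ F, ∀ i, |x i| ≤ V) :
    ∀ x ∈ convexHull ℝ F, ∀ i, |x i| ≤ V := by
  have hconv : Convex ℝ {x : Fin n → ℝ | ∀ i, |x i| ≤ V} := by
    intro x hx y hy a b ha hb hab i
    have : (a • x + b • y) i = a * x i + b * y i := rfl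
    rw [Set.mem_setOf_eq] at hx hy
    calc |(a • x + b • y) i| = |a * x i + b * y i| := by rw [this]
    _ ≤ |a * x i| + |b * y i| := abs_add_le _ _
    _ = a * |x i| + b * |y i| := by rw [abs_mul, abs_mul, abs_of_nonneg ha, abs_of_nonneg hb]
    _ ≤ a * V + b * V := by
        have h1 := mul_le_mul_of_nonneg_left (hx i) ha
        have h2 := mul_le_mul_of_nonneg_left (hy i) hb
        linarith
    _ = V := by rw [← add_mul, hab, one_mul]
  exact fun x hx => convexHull_min hF hconv hx

end SCGaux

namespace SCGaux

noncomputable def Rbound {n g h : ℕ} (vs : Fin g → Fin n → ℤ) (rs : Fin h → Fin n → ℤ)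
    (Mstar : ℤ) : ℝ :=
  (∑ i', ∑ t, |((vs i' t : ℤ) : ℝ)|) + ((Mstar : ℝ) + 1) * ∑ j, ∑ t, |((rs j t : ℝ))|

lemma truncation {n n₂ g h : ℕ} (vs : Fin g → Fin n → ℤ) (rs : Fin h → Fin n → ℤ)
    (S : Set (Fin n → ℤ))
    (hSint : {z : Fin n → ℤ | coeZR z ∈ convexHull ℝ (coeZR '' S)} = S)
    (hSdec : convexHull ℝ (coeZR '' S)
        = convexHull ℝ (Set.range (fun i => coeZR (vs i))) + coneOf (fun j => coeZR (rs j)))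
    (hsub : convexHull ℝ (coeZR '' S)
        ⊆ coneOf (Sum.elim (unitVecs (n - n₂)) (fun j => coeZR (rs j))))
    (Mstar : ℤ) (hMstar : 0 < Mstar)
    (α : Fin n → ℤ) (β : ℝ)
    (hαe : ∀ k : Fin n, (k : ℕ) < n - n₂ → (0:ℝ) ≤ (α k : ℝ))
    (hαr : ∀ j, 0 ≤ dotIR α (coeZR (rs j)))
    (hicpt : ∀ j, 0 < dotIR α (coeZR (rs j)) → β ≤ (Mstar : ℝ) * dotIR α (coeZR (rs j)))
    (z : Fin n → ℤ) (hz : z ∈ S) (hzβ : dotIR α (coeZR z) ≤ β) :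
    ∃ z' ∈ S, (∀ i, |(z' i : ℝ)| ≤ Rbound vs rs Mstar)
      ∧ dotIR α (coeZR z') = dotIR α (coeZR z) := by
  classical
  have hzhull : coeZR z ∈ convexHull ℝ (coeZR '' S) := by
    rw [← hSint] at hz; exact hz
  rw [hSdec] at hzhull
  obtain ⟨q, hq, w, hw, hqw⟩ := Set.mem_add.mp hzhull
  obtain ⟨d, hd, hwsum⟩ := hw
  have hαhull : ∀ y ∈ convexHull ℝ (coeZR '' S), 0 ≤ dotIR α y := by
    intro y hy
    obtain ⟨cc, hcc, hysum⟩ := hsub hy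
    rw [hysum, dotIR_sumv]
    refine Finset.sum_nonneg fun u _ => ?_
    rw [dotIR_smul]
    refine mul_nonneg (hcc u) ?_
    cases u with
    | inl k =>
        have hk : (k : ℕ) < n := lt_of_lt_of_le k.2 (Nat.sub_le n n₂)
        have heval : dotIR α (Sum.elim (unitVecs (n - n₂)) (fun j => coeZR (rs j)) (Sum.inl k))
            = (α ⟨(k : ℕ), hk⟩ : ℝ) := by
          show dotIR α (unitVecs (n - n₂) k) = _
          rw [dotIR]
          rw [Finset.sum_eq_single (⟨(k : ℕ), hk⟩ : Fin n)
            (fun t _ htk => by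
              have hne : ((t : ℕ) ≠ (k : ℕ)) := fun hh => htk (Fin.ext hh)
              simp [unitVecs, hne])
            (by simp)]
          simp [unitVecs]
        rw [heval]
        exact hαe _ k.2
    | inr j => exact hαr j
  have hq_in_hull : q ∈ convexHull ℝ (coeZR '' S) := by
    rw [hSdec]
    have h0 : (0 : Fin n → ℝ) ∈ coneOf (fun j => coeZR (rs j)) := zero_mem_coneOf _
    have := Set.add_mem_add hq h0
    simpa using this
  have hαq : 0 ≤ dotIR α q := hαhull q hq_in_hull
  have hval : dotIR α (coeZR z) = dotIR α q + ∑ j, d j * dotIR α (coeZR (rs j)) := by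
    rw [← hqw, dotIR_add, hwsum, dotIR_sumv]
    congr 1
    exact Finset.sum_congr rfl fun j _ => dotIR_smul α (d j) _
  have hterm : ∀ j0, d j0 * dotIR α (coeZR (rs j0)) ≤ dotIR α (coeZR z) := by
    intro j0
    have h1 : d j0 * dotIR α (coeZR (rs j0)) ≤ ∑ j, d j * dotIR α (coeZR (rs j)) :=
      Finset.single_le_sum (f := fun j => d j * dotIR α (coeZR (rs j)))
        (fun j _ => mul_nonneg (hd j) (hαr j)) (Finset.mem_univ j0)
    linarith [hval, hαq]
  have hdM : ∀ j, 0 < dotIR α (coeZR (rs j)) → d j ≤ (Mstar : ℝ) := by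
    intro j hj
    have h1 : d j * dotIR α (coeZR (rs j)) ≤ (Mstar : ℝ) * dotIR α (coeZR (rs j)) :=
      le_trans (hterm j) (le_trans hzβ (hicpt j hj))
    exact le_of_mul_le_mul_right h1 hj
  set fl : Fin h → ℤ := fun j => if 0 < dotIR α (coeZR (rs j)) then 0 else ⌊d j⌋ with hfl
  set z' : Fin n → ℤ := fun t => z t - ∑ j, fl j * rs j t with hz'
  set ecoef : Fin h → ℝ := fun j => d j - (fl j : ℝ) with hecoef
  have hfl_le : ∀ j, (fl j : ℝ) ≤ d j := by
    intro j
    rw [hfl]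
    by_cases hj : 0 < dotIR α (coeZR (rs j))
    · simp only [if_pos hj, Int.cast_zero]; exact hd j
    · simp only [if_neg hj]; exact Int.floor_le (d j)
  have hecoef_nonneg : ∀ j, 0 ≤ ecoef j := fun j => by
    rw [hecoef]; dsimp only; linarith [hfl_le j]
  have hecoef_le : ∀ j, ecoef j ≤ (Mstar : ℝ) + 1 := by
    intro j
    rw [hecoef]; dsimp only
    rw [hfl]
    by_cases hj : 0 < dotIR α (coeZR (rs j))
    · simp only [if_pos hj, Int.cast_zero, sub_zero]
      have : (0:ℝ) < (Mstar:ℝ) := by exact_mod_cast hMstar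
      linarith [hdM j hj]
    · simp only [if_neg hj]
      have h1 : d j < (⌊d j⌋ : ℝ) + 1 := Int.lt_floor_add_one (d j)
      have h2 : (0:ℝ) < (Mstar : ℝ) := by exact_mod_cast hMstar
      linarith
  have hwt : ∀ t, w t = ∑ j, d j * (rs j t : ℝ) := by
    intro t
    rw [hwsum, Finset.sum_apply]
    exact Finset.sum_congr rfl fun j _ => by simp [coeZR]
  have hzt : ∀ t, (z t : ℝ) = q t + ∑ j, d j * (rs j t : ℝ) := by
    intro t
    calc (z t : ℝ) = (q + w) t := (congrFun hqw t).symm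
    _ = q t + w t := rfl
    _ = q t + ∑ j, d j * (rs j t : ℝ) := by rw [hwt t]
  have hz'coe : ∀ t, (z' t : ℝ) = q t + ∑ j, ecoef j * (rs j t : ℝ) := by
    intro t
    have h1 : (z' t : ℝ) = (z t : ℝ) - ∑ j, (fl j : ℝ) * (rs j t : ℝ) := by
      rw [hz']; push_cast; ring
    have h2 : ∑ j, ecoef j * (rs j t : ℝ)
        = (∑ j, d j * (rs j t : ℝ)) - ∑ j, (fl j : ℝ) * (rs j t : ℝ) := by
      rw [← Finset.sum_sub_distrib]
      refine Finset.sum_congr rfl fun j _ => ?_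
      rw [hecoef]; dsimp only; ring
    rw [h1, hzt t, h2]
    ring
  have hz'fun : coeZR z' = q + ∑ j, ecoef j • coeZR (rs j) := by
    funext t
    show ((z' t : ℤ) : ℝ) = _
    rw [hz'coe t, Pi.add_apply, Finset.sum_apply]
    simp [coeZR]
  have hz'hull : coeZR z' ∈ convexHull ℝ (coeZR '' S) := by
    rw [hSdec]
    refine Set.mem_add.mpr ⟨q, hq, ∑ j, ecoef j • coeZR (rs j),
      ⟨ecoef, hecoef_nonneg, rfl⟩, ?_⟩
    rw [← hz'fun]
  have hz'S : z' ∈ S := by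
    rw [← hSint]
    exact hz'hull
  refine ⟨z', hz'S, ?_, ?_⟩
  · -- coordinate bound
    intro i
    have hqi : |q i| ≤ ∑ i', ∑ t, |((vs i' t : ℤ) : ℝ)| := by
      refine convexHull_abs_le _ _ ?_ q hq i
      rintro x ⟨i0, rfl⟩ i1
      calc |coeZR (vs i0) i1| = |((vs i0 i1 : ℤ) : ℝ)| := rfl
      _ ≤ ∑ t, |((vs i0 t : ℤ) : ℝ)| :=
          Finset.single_le_sum (f := fun t => |((vs i0 t : ℤ) : ℝ)|)
            (fun t _ => abs_nonneg _) (Finset.mem_univ i1)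
      _ ≤ ∑ i', ∑ t, |((vs i' t : ℤ) : ℝ)| :=
          Finset.single_le_sum (f := fun i' => ∑ t, |((vs i' t : ℤ) : ℝ)|)
            (fun i' _ => Finset.sum_nonneg fun t _ => abs_nonneg _) (Finset.mem_univ i0)
    have hsumb : |∑ j, ecoef j * (rs j i : ℝ)|
        ≤ ((Mstar : ℝ) + 1) * ∑ j, ∑ t, |((rs j t : ℝ))| := by
      calc |∑ j, ecoef j * (rs j i : ℝ)| ≤ ∑ j, |ecoef j * (rs j i : ℝ)| :=
            Finset.abs_sum_le_sum_abs _ _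
      _ ≤ ∑ j, ((Mstar : ℝ) + 1) * |(rs j i : ℝ)| := by
            refine Finset.sum_le_sum fun j _ => ?_
            rw [abs_mul, abs_of_nonneg (hecoef_nonneg j)]
            exact mul_le_mul_of_nonneg_right (hecoef_le j) (abs_nonneg _)
      _ = ((Mstar : ℝ) + 1) * ∑ j, |(rs j i : ℝ)| := by rw [Finset.mul_sum]
      _ ≤ ((Mstar : ℝ) + 1) * ∑ j, ∑ t, |((rs j t : ℝ))| := by
            have hM1 : (0:ℝ) ≤ (Mstar : ℝ) + 1 := by
              have : (0:ℝ) < (Mstar : ℝ) := by exact_mod_cast hMstar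
              linarith
            refine mul_le_mul_of_nonneg_left ?_ hM1
            refine Finset.sum_le_sum fun j _ => ?_
            exact Finset.single_le_sum (f := fun t => |((rs j t : ℝ))|)
              (fun t _ => abs_nonneg _) (Finset.mem_univ i)
    calc |(z' i : ℝ)| = |q i + ∑ j, ecoef j * (rs j i : ℝ)| := by rw [hz'coe i]
    _ ≤ |q i| + |∑ j, ecoef j * (rs j i : ℝ)| := abs_add_le _ _
    _ ≤ Rbound vs rs Mstar := by
        rw [Rbound]
        exact add_le_add hqi hsumb
  · -- α value preserved
    have hv' : dotIR α (coeZR z') = dotIR α q + ∑ j, ecoef j * dotIR α (coeZR (rs j)) := by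
      rw [hz'fun, dotIR_add, dotIR_sumv]
      congr 1
      exact Finset.sum_congr rfl fun j _ => dotIR_smul α (ecoef j) _
    rw [hv', hval]
    congr 1
    refine Finset.sum_congr rfl fun j _ => ?_
    rw [hecoef]; dsimp only
    rw [hfl]
    by_cases hj : 0 < dotIR α (coeZR (rs j))
    · simp [if_pos hj]
    · have h0 : dotIR α (coeZR (rs j)) = 0 := le_antisymm (not_lt.mp hj) (hαr j)
      rw [h0]; ring
end SCGaux

namespace SCGaux

theorem minkowski' {m : ℕ} {ι : Type} [Fintype ι] (G : ι → Fin m → ℚ) :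
    ∃ (s : ℕ) (v : Fin s → Fin m → ℚ),
      {x : Fin m → ℝ | ∀ i, rdot (G i) x ≤ 0} = coneOf (fun a => cQ (v a)) := by
  obtain ⟨s, v, hv⟩ := minkowski (G ∘ (Fintype.equivFin ι).symm)
  refine ⟨s, v, ?_⟩
  rw [← hv]
  ext x
  simp only [Set.mem_setOf_eq, Function.comp]
  constructor
  · intro hx i; exact hx _
  · intro hx i
    have := hx (Fintype.equivFin ι i)
    simpa using this

lemma rdot_intQ {m : ℕ} (w : Fin m → ℤ) (lam : Fin m → ℝ) :
    rdot (fun i => (w i : ℚ)) lam = ∑ i, lam i * (w i : ℝ) := by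
  rw [rdot]
  refine Finset.sum_congr rfl fun i _ => ?_
  push_cast
  ring

lemma rdot_rowsub {m : ℕ} (u w : Fin m → ℚ) (x : Fin m → ℝ) :
    rdot (u - w) x = rdot u x - rdot w x := by
  simp [rdot, sub_mul, Finset.sum_sub_distrib]

lemma rdot_rowsmul {m : ℕ} (a : ℚ) (u : Fin m → ℚ) (x : Fin m → ℝ) :
    rdot (a • u) x = (a : ℝ) * rdot u x := by
  simp only [rdot, Pi.smul_apply, smul_eq_mul, Finset.mul_sum]
  refine Finset.sum_congr rfl fun i _ => ?_
  push_cast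
  ring

lemma rdot_rowneg {m : ℕ} (u : Fin m → ℚ) (x : Fin m → ℝ) :
    rdot (-u) x = -rdot u x := by
  simp [rdot, Finset.sum_neg_distrib]

lemma rdot_single {m : ℕ} (i : Fin m) (c : ℚ) (x : Fin m → ℝ) :
    rdot (fun i' => if i' = i then c else 0) x = (c : ℝ) * x i := by
  rw [rdot]
  rw [Finset.sum_eq_single i (fun i' _ hne => by simp [hne]) (by simp)]
  simp

lemma rdot_rowzero {m : ℕ} (x : Fin m → ℝ) : rdot (0 : Fin m → ℚ) x = 0 := by
  simp [rdot]

lemma isRatPolyhedron_of_fintype {n : ℕ} {ι : Type} [Fintype ι] (C : ι → Fin n → ℚ) (d : ι → ℚ) :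
    IsRatPolyhedron {x : Fin n → ℝ | ∀ u : ι, (∑ t, ((C u t : ℚ) : ℝ) * x t) ≤ ((d u : ℚ) : ℝ)} := by
  refine ⟨Fintype.card ι, Matrix.of (fun i t => C ((Fintype.equivFin ι).symm i) t),
    fun i => d ((Fintype.equivFin ι).symm i), ?_⟩
  ext x
  simp only [Set.mem_setOf_eq, Matrix.of_apply]
  constructor
  · intro hx i; exact hx _
  · intro hx u
    have := hx (Fintype.equivFin ι u)
    simpa using this

lemma isRatPolyhedron_empty {n : ℕ} : IsRatPolyhedron (∅ : Set (Fin n → ℝ)) := by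
  refine ⟨1, Matrix.of (fun _ _ => 0), fun _ => -1, ?_⟩
  ext x
  simp only [Set.mem_empty_iff_false, Set.mem_setOf_eq, Matrix.of_apply, false_iff]
  push_neg
  refine ⟨0, ?_⟩
  simp

end SCGaux

namespace SCGaux

lemma cut_formula {n n₂ g h m K : ℕ}
    (vs : Fin g → Fin n → ℤ) (rs : Fin h → Fin n → ℤ) (S : Set (Fin n → ℤ))
    (hSint : {z : Fin n → ℤ | coeZR z ∈ convexHull ℝ (coeZR '' S)} = S)
    (hSdec : convexHull ℝ (coeZR '' S)
        = convexHull ℝ (Set.range (fun i => coeZR (vs i))) + coneOf (fun j => coeZR (rs j)))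
    (hsub : convexHull ℝ (coeZR '' S)
        ⊆ coneOf (Sum.elim (unitVecs (n - n₂)) (fun j => coeZR (rs j))))
    (Mstar : ℤ) (hMstar : 0 < Mstar)
    (A : Matrix (Fin m) (Fin n) ℤ) (b : Fin m → ℤ)
    (hAe : ∀ i, ∀ k : Fin n, (k : ℕ) < n - n₂ → 0 ≤ A i k)
    (hAr : ∀ i, ∀ j : Fin h, 0 ≤ ∑ k, A i k * rs j k)
    (eK : Fin K → Fin n → ℤ)
    (heKS : ∀ k, eK k ∈ S)
    (heKsurj : ∀ z ∈ S, (∀ i, |(z i : ℝ)| ≤ Rbound vs rs Mstar) → ∃ k, eK k = z)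
    (J : Finset (Fin h)) (Tk : Finset (Fin K)) (kb : Fin K) (hkb : kb ∈ Tk)
    (α : Fin n → ℤ) (β : ℝ) (lam : Fin m → ℝ)
    (hlam0 : ∀ i, 0 ≤ lam i)
    (hα : ∀ t, (α t : ℝ) = ∑ i, lam i * (A i t : ℝ))
    (hβ : β = ∑ i, lam i * (b i : ℝ))
    (hJpos : ∀ j ∈ J, 0 < ∑ i, lam i * ((∑ k, A i k * rs j k : ℤ) : ℝ))
    (hJz : ∀ j ∉ J, (∑ i, lam i * ((∑ k, A i k * rs j k : ℤ) : ℝ)) ≤ 0)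
    (hJM : ∀ j ∈ J, (∑ i, lam i * (b i : ℝ))
        ≤ (Mstar : ℝ) * ∑ i, lam i * ((∑ k, A i k * rs j k : ℤ) : ℝ))
    (hTin : ∀ k ∈ Tk, (∑ i, lam i * ((∑ t, A i t * eK k t : ℤ) : ℝ)) ≤ ∑ i, lam i * (b i : ℝ))
    (hTout : ∀ k ∉ Tk, (∑ i, lam i * (b i : ℝ)) < ∑ i, lam i * ((∑ t, A i t * eK k t : ℤ) : ℝ))
    (hTmax : ∀ k ∈ Tk, (∑ i, lam i * ((∑ t, A i t * eK k t : ℤ) : ℝ))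
        ≤ ∑ i, lam i * ((∑ t, A i t * eK kb t : ℤ) : ℝ)) :
    cutLe S α β = {x | dotIR α x ≤ dotIR α (coeZR (eK kb))}
      ∧ dotIR α (coeZR (eK kb)) ≤ β := by
  classical
  have hAze : ∀ k, dotIR α (coeZR (eK k)) = ∑ i, lam i * ((∑ t, A i t * eK k t : ℤ) : ℝ) := by
    intro k
    rw [dot_swap A lam α hα (coeZR (eK k))]
    refine Finset.sum_congr rfl fun i _ => ?_
    congr 1
    push_cast
    exact Finset.sum_congr rfl fun t _ => rfl
  have hAre : ∀ j, dotIR α (coeZR (rs j)) = ∑ i, lam i * ((∑ k, A i k * rs j k : ℤ) : ℝ) := by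
    intro j
    rw [dot_swap A lam α hα (coeZR (rs j))]
    refine Finset.sum_congr rfl fun i _ => ?_
    congr 1
    push_cast
    exact Finset.sum_congr rfl fun t _ => rfl
  have hαr0 : ∀ j, 0 ≤ dotIR α (coeZR (rs j)) := by
    intro j
    rw [hAre j]
    refine Finset.sum_nonneg fun i _ => mul_nonneg (hlam0 i) ?_
    exact_mod_cast hAr i j
  have hαe : ∀ k : Fin n, (k : ℕ) < n - n₂ → (0:ℝ) ≤ (α k : ℝ) := by
    intro k hk
    rw [hα k]
    refine Finset.sum_nonneg fun i _ => mul_nonneg (hlam0 i) ?_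
    exact_mod_cast hAe i k hk
  have hicpt : ∀ j, 0 < dotIR α (coeZR (rs j)) → β ≤ (Mstar : ℝ) * dotIR α (coeZR (rs j)) := by
    intro j hj
    by_cases hjJ : j ∈ J
    · rw [hAre j, hβ]; exact hJM j hjJ
    · exfalso
      rw [hAre j] at hj
      exact absurd hj (not_lt.mpr (hJz j hjJ))
  have hmax : ∀ z ∈ S, dotIR α (coeZR z) ≤ β → dotIR α (coeZR z) ≤ dotIR α (coeZR (eK kb)) := by
    intro z hzS hzβ
    obtain ⟨z', hz'S, hz'bd, hz'val⟩ :=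
      truncation vs rs S hSint hSdec hsub Mstar hMstar α β hαe hαr0 hicpt z hzS hzβ
    obtain ⟨k, hk⟩ := heKsurj z' hz'S hz'bd
    have hkTk : k ∈ Tk := by
      by_contra hkTk
      have h1 := hTout k hkTk
      rw [← hAze k, hk, hz'val] at h1
      rw [hβ] at hzβ
      linarith
    have h2 := hTmax k hkTk
    rw [← hAze k, ← hAze kb, hk, hz'val] at h2
    exact h2
  have hkbβ : dotIR α (coeZR (eK kb)) ≤ β := by
    rw [hAze kb, hβ]
    exact hTin kb hkb
  exact ⟨floorS_cutLe_eq S α β (eK kb) (heKS kb) hkbβ hmax, hkbβ⟩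

lemma build_omega {n m : ℕ} (A : Matrix (Fin m) (Fin n) ℤ) (b : Fin m → ℤ)
    (α : Fin n → ℤ) (lam : Fin m → ℝ) (hlam0 : ∀ i, 0 ≤ lam i)
    (hα : ∀ t, (α t : ℝ) = ∑ i, lam i * (A i t : ℝ))
    (xh : Fin n → ℝ) (hxh : ∀ i, ∑ j, (A i j : ℝ) * xh j ≤ (b i : ℝ))
    (htight : ∀ i, lam i ≠ 0 → ∑ j, (A i j : ℝ) * xh j = (b i : ℝ)) :
    (α, ∑ i, lam i * (b i : ℝ))
      ∈ PiLe A b {x : Fin n → ℝ | ∀ i, ∑ j, (A i j : ℝ) * x j ≤ (b i : ℝ)} := by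
  refine ⟨lam, hlam0, hα, rfl, ?_, ?_⟩
  · refine ⟨xh, hxh, ?_⟩
    rw [dot_swap A lam α hα xh]
    refine Finset.sum_congr rfl fun i _ => ?_
    by_cases hi : lam i = 0
    · rw [hi, zero_mul, zero_mul]
    · rw [htight i hi]
  · rintro tval ⟨x, hxP, rfl⟩
    rw [dot_swap A lam α hα x]
    refine Finset.sum_le_sum fun i _ => ?_
    exact mul_le_mul_of_nonneg_left (hxP i) (hlam0 i)

end SCGaux


open SCGaux

set_option maxHeartbeats 2000000

/-- With `S` in normal form and `P↓ = {x : Ax ≤ b}` a packing-type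
polyhedron (`A, b` integral, `Ax ≥ 0` on `{e¹,…,e^{n₁},r¹,…,r^h}`, `b ≥ 0`, `m ≥ 1`),
for any positive integer `M*`, the set `P↓_{S,Π}` with
`Π = {(α,β) ∈ Π_{P↓} : β/(αrʲ) ≤ M* for all j ∈ r-supp(α)}` is a rational polyhedron. -/
theorem scg_bounded_intercept_closure_isRatPolyhedron_packing {n n₂ g h m : ℕ}
    (hm : 0 < m)
    (vs : Fin g → Fin n → ℤ) (rs : Fin h → Fin n → ℤ)
    (S : Set (Fin n → ℤ)) (hSne : S.Nonempty)
    (hSint : {z : Fin n → ℤ | coeZR z ∈ convexHull ℝ (coeZR '' S)} = S)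
    (hSdec : convexHull ℝ (coeZR '' S)
        = convexHull ℝ (Set.range (fun i => coeZR (vs i))) + coneOf (fun j => coeZR (rs j)))
    (hptd : ∀ x ∈ coneOf (fun j => coeZR (rs j)),
        -x ∈ coneOf (fun j => coeZR (rs j)) → x = 0)
    (hzero : ∀ x ∈ coneOf (fun j => coeZR (rs j)), ∀ i : Fin n, (i : ℕ) < n - n₂ → x i = 0)
    (hsub : convexHull ℝ (coeZR '' S)
        ⊆ coneOf (Sum.elim (unitVecs (n - n₂)) (fun j => coeZR (rs j))))
    (A : Matrix (Fin m) (Fin n) ℤ) (b : Fin m → ℤ)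
    (hAe : ∀ i, ∀ k : Fin n, (k : ℕ) < n - n₂ → 0 ≤ A i k)
    (hAr : ∀ i, ∀ j : Fin h, 0 ≤ ∑ k, A i k * rs j k)
    (hb : ∀ i, 0 ≤ b i)
    (Mstar : ℤ) (hMstar : 0 < Mstar) :
    IsRatPolyhedron (closLe S
      {p ∈ PiLe A b {x | ∀ i, ∑ j, (A i j : ℝ) * x j ≤ (b i : ℝ)} |
        ∀ j : Fin h, 0 < ∑ k, p.1 k * rs j k →
          p.2 / ((∑ k, p.1 k * rs j k : ℤ) : ℝ) ≤ (Mstar : ℝ)}) := by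
  classical
  set P : Set (Fin n → ℝ) := {x | ∀ i, ∑ j, (A i j : ℝ) * x j ≤ (b i : ℝ)} with hPdef
  set Ω : Set ((Fin n → ℤ) × ℝ) :=
    {p ∈ PiLe A b P | ∀ j : Fin h, 0 < ∑ k, p.1 k * rs j k →
      p.2 / ((∑ k, p.1 k * rs j k : ℤ) : ℝ) ≤ (Mstar : ℝ)} with hΩdef
  by_cases hemp : ∀ p ∈ Ω, ∃ z ∈ S, dotIR p.1 (coeZR z) ≤ p.2
  swap
  · push_neg at hemp
    obtain ⟨p, hpΩ, hp⟩ := hemp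
    have hcut : cutLe S p.1 p.2 = ∅ := by
      rw [cutLe, if_neg]
      push_neg
      exact hp
    have hclos : closLe S Ω = ∅ := by
      rw [Set.eq_empty_iff_forall_notMem]
      intro x hx
      have := Set.biInter_subset_of_mem hpΩ hx
      rw [hcut] at this
      exact this
    rw [hclos]
    exact isRatPolyhedron_empty
  · -- main case
    have hSRfin : {z : Fin n → ℤ | z ∈ S ∧ ∀ i, |(z i : ℝ)| ≤ Rbound vs rs Mstar}.Finite := by
      apply Set.Finite.subset (Set.Finite.pi (t := fun _ : Fin n =>
        Set.Icc (-(⌈Rbound vs rs Mstar⌉)) ⌈Rbound vs rs Mstar⌉)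
        (fun i => Set.finite_Icc _ _))
      intro z hz
      rw [Set.mem_pi]
      intro i _
      rw [Set.mem_Icc]
      have h1 := (abs_le.mp (hz.2 i))
      constructor
      · have h2 : (-(⌈Rbound vs rs Mstar⌉) : ℝ) ≤ (z i : ℝ) := by
          push_cast
          have := Int.le_ceil (Rbound vs rs Mstar)
          linarith [h1.1]
        exact_mod_cast h2
      · have h2 : ((z i : ℝ)) ≤ (⌈Rbound vs rs Mstar⌉ : ℝ) := le_trans h1.2 (Int.le_ceil _)
        exact_mod_cast h2
    set K := hSRfin.toFinset.card with hK
    set eK : Fin K → (Fin n → ℤ) := fun k => (hSRfin.toFinset.equivFin.symm k).1 with heK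
    have heKmem : ∀ k, eK k ∈ S ∧ ∀ i, |((eK k) i : ℝ)| ≤ Rbound vs rs Mstar := by
      intro k
      have h1 := (hSRfin.toFinset.equivFin.symm k).2
      rw [Set.Finite.mem_toFinset] at h1
      exact h1
    have heKsurj : ∀ z ∈ S, (∀ i, |(z i : ℝ)| ≤ Rbound vs rs Mstar) → ∃ k, eK k = z := by
      intro z hzS hzbd
      have hzm : z ∈ hSRfin.toFinset := by rw [Set.Finite.mem_toFinset]; exact ⟨hzS, hzbd⟩
      refine ⟨hSRfin.toFinset.equivFin ⟨z, hzm⟩, ?_⟩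
      rw [heK]
      simp
    clear_value eK
    set ArI : Fin h → Fin m → ℤ := fun j i => ∑ t, A i t * rs j t with hArI
    set AzI : Fin K → Fin m → ℤ := fun k i => ∑ t, A i t * eK k t with hAzI
    set bQ : Fin m → ℚ := fun i => (b i : ℚ) with hbQ
    set ArQ : Fin h → Fin m → ℚ := fun j i => (ArI j i : ℚ) with hArQ
    set AzQ : Fin K → Fin m → ℚ := fun k i => (AzI k i : ℚ) with hAzQ
    have hrdot_bQ : ∀ lam : Fin m → ℝ, rdot bQ lam = ∑ i, lam i * (b i : ℝ) :=
      fun lam => by rw [hbQ]; exact rdot_intQ b lam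
    have hrdot_ArQ : ∀ (j : Fin h) (lam : Fin m → ℝ),
        rdot (ArQ j) lam = ∑ i, lam i * ((∑ t, A i t * rs j t : ℤ) : ℝ) :=
      fun j lam => by rw [hArQ]; exact rdot_intQ (ArI j) lam
    have hrdot_AzQ : ∀ (k : Fin K) (lam : Fin m → ℝ),
        rdot (AzQ k) lam = ∑ i, lam i * ((∑ t, A i t * eK k t : ℤ) : ℝ) :=
      fun k lam => by rw [hAzQ]; exact rdot_intQ (AzI k) lam
    clear_value ArI AzI bQ ArQ AzQ
    set rows : (Finset (Fin m) × Finset (Fin h) × Finset (Fin K) × Fin K) →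
        (Fin m ⊕ Fin m ⊕ Fin h ⊕ Fin h ⊕ Fin K ⊕ Fin K) → Fin m → ℚ :=
      fun pc => Sum.elim (fun i => (fun i' => if i' = i then (-1 : ℚ) else 0))
        (Sum.elim (fun i => if i ∈ pc.1 then 0 else (fun i' => if i' = i then (1:ℚ) else 0))
        (Sum.elim (fun j => if j ∈ pc.2.1 then -(ArQ j) else (ArQ j))
        (Sum.elim (fun j => if j ∈ pc.2.1 then (bQ - (Mstar : ℚ) • (ArQ j)) else 0)
        (Sum.elim (fun k => if k ∈ pc.2.2.1 then (AzQ k - bQ) else (bQ - AzQ k))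
        (fun k => if k ∈ pc.2.2.1 then (AzQ k - AzQ pc.2.2.2) else 0))))) with hrows
    have hrow1 : ∀ pc (i : Fin m) (lam : Fin m → ℝ),
        rdot (rows pc (Sum.inl i)) lam = -lam i := by
      intro pc i lam
      rw [hrows]
      simp only [Sum.elim_inl]
      rw [rdot_single]
      push_cast
      ring
    have hrow2 : ∀ pc (i : Fin m) (lam : Fin m → ℝ),
        rdot (rows pc (Sum.inr (Sum.inl i))) lam = if i ∈ pc.1 then 0 else lam i := by
      intro pc i lam
      rw [hrows]
      simp only [Sum.elim_inl, Sum.elim_inr]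
      by_cases hi : i ∈ pc.1
      · rw [if_pos hi, if_pos hi, rdot_rowzero]
      · rw [if_neg hi, if_neg hi, rdot_single]
        push_cast
        ring
    have hrow3 : ∀ pc (j : Fin h) (lam : Fin m → ℝ),
        rdot (rows pc (Sum.inr (Sum.inr (Sum.inl j)))) lam
          = if j ∈ pc.2.1 then -(rdot (ArQ j) lam) else rdot (ArQ j) lam := by
      intro pc j lam
      rw [hrows]
      simp only [Sum.elim_inl, Sum.elim_inr]
      by_cases hj : j ∈ pc.2.1
      · rw [if_pos hj, if_pos hj, rdot_rowneg]
      · rw [if_neg hj, if_neg hj]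
    have hrow4 : ∀ pc (j : Fin h) (lam : Fin m → ℝ),
        rdot (rows pc (Sum.inr (Sum.inr (Sum.inr (Sum.inl j))))) lam
          = if j ∈ pc.2.1 then rdot bQ lam - (Mstar : ℝ) * rdot (ArQ j) lam else 0 := by
      intro pc j lam
      rw [hrows]
      simp only [Sum.elim_inl, Sum.elim_inr]
      by_cases hj : j ∈ pc.2.1
      · rw [if_pos hj, if_pos hj, rdot_rowsub, rdot_rowsmul]
        push_cast
        ring
      · rw [if_neg hj, if_neg hj, rdot_rowzero]
    have hrow5 : ∀ pc (k : Fin K) (lam : Fin m → ℝ),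
        rdot (rows pc (Sum.inr (Sum.inr (Sum.inr (Sum.inr (Sum.inl k)))))) lam
          = if k ∈ pc.2.2.1 then rdot (AzQ k) lam - rdot bQ lam
            else rdot bQ lam - rdot (AzQ k) lam := by
      intro pc k lam
      rw [hrows]
      simp only [Sum.elim_inl, Sum.elim_inr]
      by_cases hk : k ∈ pc.2.2.1
      · rw [if_pos hk, if_pos hk, rdot_rowsub]
      · rw [if_neg hk, if_neg hk, rdot_rowsub]
    have hrow6 : ∀ pc (k : Fin K) (lam : Fin m → ℝ),
        rdot (rows pc (Sum.inr (Sum.inr (Sum.inr (Sum.inr (Sum.inr k)))))) lam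
          = if k ∈ pc.2.2.1 then rdot (AzQ k) lam - rdot (AzQ pc.2.2.2) lam else 0 := by
      intro pc k lam
      rw [hrows]
      simp only [Sum.elim_inl, Sum.elim_inr]
      by_cases hk : k ∈ pc.2.2.1
      · rw [if_pos hk, if_pos hk, rdot_rowsub]
      · rw [if_neg hk, if_neg hk, rdot_rowzero]
    have hQiff : ∀ pc (lam : Fin m → ℝ), (∀ u, rdot (rows pc u) lam ≤ 0) ↔
        ((∀ i, 0 ≤ lam i) ∧ (∀ i ∉ pc.1, lam i = 0)
        ∧ (∀ j ∈ pc.2.1, 0 ≤ rdot (ArQ j) lam) ∧ (∀ j ∉ pc.2.1, rdot (ArQ j) lam ≤ 0)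
        ∧ (∀ j ∈ pc.2.1, rdot bQ lam ≤ (Mstar : ℝ) * rdot (ArQ j) lam)
        ∧ (∀ k ∈ pc.2.2.1, rdot (AzQ k) lam ≤ rdot bQ lam)
        ∧ (∀ k ∉ pc.2.2.1, rdot bQ lam ≤ rdot (AzQ k) lam)
        ∧ (∀ k ∈ pc.2.2.1, rdot (AzQ k) lam ≤ rdot (AzQ pc.2.2.2) lam)) := by
      intro pc lam
      constructor
      · intro hQ
        refine ⟨fun i => ?_, fun i hi => ?_, fun j hj => ?_, fun j hj => ?_, fun j hj => ?_,
          fun k hk => ?_, fun k hk => ?_, fun k hk => ?_⟩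
        · have := hQ (Sum.inl i); rw [hrow1] at this; linarith
        · have h1 := hQ (Sum.inr (Sum.inl i)); rw [hrow2, if_neg hi] at h1
          have h2 := hQ (Sum.inl i); rw [hrow1] at h2
          linarith
        · have := hQ (Sum.inr (Sum.inr (Sum.inl j))); rw [hrow3, if_pos hj] at this; linarith
        · have := hQ (Sum.inr (Sum.inr (Sum.inl j))); rw [hrow3, if_neg hj] at this; linarith
        · have := hQ (Sum.inr (Sum.inr (Sum.inr (Sum.inl j)))); rw [hrow4, if_pos hj] at this
          linarith
        · have := hQ (Sum.inr (Sum.inr (Sum.inr (Sum.inr (Sum.inl k)))))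
          rw [hrow5, if_pos hk] at this; linarith
        · have := hQ (Sum.inr (Sum.inr (Sum.inr (Sum.inr (Sum.inl k)))))
          rw [hrow5, if_neg hk] at this; linarith
        · have := hQ (Sum.inr (Sum.inr (Sum.inr (Sum.inr (Sum.inr k)))))
          rw [hrow6, if_pos hk] at this; linarith
      · rintro ⟨h1, h2, h3, h4, h5, h6, h7, h8⟩ u
        rcases u with i | u
        · rw [hrow1]; linarith [h1 i]
        rcases u with i | u
        · rw [hrow2]
          by_cases hi : i ∈ pc.1
          · rw [if_pos hi]
          · rw [if_neg hi, h2 i hi]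
        rcases u with j | u
        · rw [hrow3]
          by_cases hj : j ∈ pc.2.1
          · rw [if_pos hj]; linarith [h3 j hj]
          · rw [if_neg hj]; exact h4 j hj
        rcases u with j | u
        · rw [hrow4]
          by_cases hj : j ∈ pc.2.1
          · rw [if_pos hj]; linarith [h5 j hj]
          · rw [if_neg hj]
        rcases u with k | k
        · rw [hrow5]
          by_cases hk : k ∈ pc.2.2.1
          · rw [if_pos hk]; linarith [h6 k hk]
          · rw [if_neg hk]; linarith [h7 k hk]
        · rw [hrow6]
          by_cases hk : k ∈ pc.2.2.1
          · rw [if_pos hk]; linarith [h8 k hk]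
          · rw [if_neg hk]
    clear_value rows
    have hmink : ∀ pc : Finset (Fin m) × Finset (Fin h) × Finset (Fin K) × Fin K,
        ∃ (s : ℕ) (v : Fin s → Fin m → ℚ),
          {lam : Fin m → ℝ | ∀ u, rdot (rows pc u) lam ≤ 0} = coneOf (fun a => cQ (v a)) :=
      fun pc => minkowski' (rows pc)
    choose sG vG hG using hmink
    set Lmem : (Finset (Fin m) × Finset (Fin h) × Finset (Fin K) × Fin K) →
        (Fin m → ℝ) → Prop :=
      fun pc lam =>
        (∀ i, 0 ≤ lam i) ∧ (∀ i ∉ pc.1, lam i = 0)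
        ∧ (∀ j ∈ pc.2.1, 0 < rdot (ArQ j) lam) ∧ (∀ j ∉ pc.2.1, rdot (ArQ j) lam ≤ 0)
        ∧ (∀ j ∈ pc.2.1, rdot bQ lam ≤ (Mstar : ℝ) * rdot (ArQ j) lam)
        ∧ (∀ k ∈ pc.2.2.1, rdot (AzQ k) lam ≤ rdot bQ lam)
        ∧ (∀ k ∉ pc.2.2.1, rdot bQ lam < rdot (AzQ k) lam)
        ∧ (∀ k ∈ pc.2.2.1, rdot (AzQ k) lam ≤ rdot (AzQ pc.2.2.2) lam) with hLmem
    have hLsubQ : ∀ pc (lam : Fin m → ℝ), Lmem pc lam → ∀ u, rdot (rows pc u) lam ≤ 0 := by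
      intro pc lam hL
      rw [hLmem] at hL
      obtain ⟨h1, h2, h3, h4, h5, h6, h7, h8⟩ := hL
      exact (hQiff pc lam).mpr ⟨h1, h2, fun j hj => (h3 j hj).le, h4, h5, h6,
        fun k hk => (h7 k hk).le, h8⟩
    set Valid : (Finset (Fin m) × Finset (Fin h) × Finset (Fin K) × Fin K) → Prop :=
      fun pc => pc.2.2.2 ∈ pc.2.2.1
        ∧ (∃ xh, xh ∈ P ∧ ∀ i ∈ pc.1, ∑ j, (A i j : ℝ) * xh j = (b i : ℝ))
        ∧ (∃ lam : Fin m → ℝ, Lmem pc lam) with hValid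
    clear_value Lmem Valid
    have hArcast : ∀ (α : Fin n → ℤ) (lam : Fin m → ℝ),
        (∀ t, (α t : ℝ) = ∑ i, lam i * (A i t : ℝ)) →
        ∀ j, ((∑ k, α k * rs j k : ℤ) : ℝ) = rdot (ArQ j) lam := by
      intro α lam hα j
      rw [hrdot_ArQ]
      have h1 : ((∑ k, α k * rs j k : ℤ) : ℝ) = dotIR α (coeZR (rs j)) := by
        rw [dotIR]
        push_cast
        simp [coeZR]
      rw [h1, dot_swap A lam α hα]
      refine Finset.sum_congr rfl fun i _ => ?_
      congr 1
      push_cast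
      simp [coeZR]
    have hAzcast : ∀ (α : Fin n → ℤ) (lam : Fin m → ℝ),
        (∀ t, (α t : ℝ) = ∑ i, lam i * (A i t : ℝ)) →
        ∀ k, dotIR α (coeZR (eK k)) = rdot (AzQ k) lam := by
      intro α lam hα k
      rw [hrdot_AzQ, dot_swap A lam α hα]
      refine Finset.sum_congr rfl fun i _ => ?_
      congr 1
      push_cast
      simp [coeZR]
    set Crow : (Σ pc : Finset (Fin m) × Finset (Fin h) × Finset (Fin K) × Fin K,
        Fin (sG pc)) → Fin n → ℚ :=
      fun u => if Valid u.1 then (fun t => ∑ i, vG u.1 u.2 i * (A i t : ℚ)) else 0 with hCrow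
    set drhs : (Σ pc : Finset (Fin m) × Finset (Fin h) × Finset (Fin K) × Fin K,
        Fin (sG pc)) → ℚ :=
      fun u => if Valid u.1 then ∑ t, (∑ i, vG u.1 u.2 i * (A i t : ℚ)) * (eK u.1.2.2.2 t : ℚ)
        else 0 with hdrhs
    clear_value Crow drhs
    suffices hfinal : closLe S Ω
        = {x : Fin n → ℝ | ∀ u : (Σ pc : Finset (Fin m) × Finset (Fin h) × Finset (Fin K)
            × Fin K, Fin (sG pc)), (∑ t, ((Crow u t : ℚ) : ℝ) * x t) ≤ ((drhs u : ℚ) : ℝ)} by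
      rw [hfinal]
      exact isRatPolyhedron_of_fintype Crow drhs
    ext x
    constructor
    · intro hx
      intro u
      obtain ⟨pc, a⟩ := u
      by_cases hv : Valid pc
      swap
      · rw [hCrow, hdrhs]
        simp only [if_neg hv]
        simp
      · have hvp := hv
        rw [hValid] at hvp
        obtain ⟨hkb, ⟨xh, hxhP, hxht⟩, ⟨lam0, hlam0L⟩⟩ := hvp
        have hxhP' : ∀ i, ∑ j, (A i j : ℝ) * xh j ≤ (b i : ℝ) := by
          have h1 := hxhP
          rw [hPdef] at h1
          exact h1
        rw [hLmem] at hlam0L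
        obtain ⟨hl01, hl02, hl03, hl04, hl05, hl06, hl07, hl08⟩ := hlam0L
        have hgQ : ∀ u', rdot (rows pc u') (cQ (vG pc a)) ≤ 0 := by
          have h1 : cQ (vG pc a) ∈ coneOf (fun a' => cQ (vG pc a')) := mem_coneOf_self _ a
          rw [← hG pc] at h1
          exact h1
        obtain ⟨hg1, hg2, hg3, hg4, hg5, hg6, hg7, hg8⟩ := (hQiff pc (cQ (vG pc a))).mp hgQ
        have hlam0Q : lam0 ∈ coneOf (fun a' => cQ (vG pc a')) := by
          rw [← hG pc]
          exact (hQiff pc lam0).mpr ⟨hl01, hl02, fun j hj => (hl03 j hj).le, hl04, hl05, hl06,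
            fun k hk => (hl07 k hk).le, hl08⟩
        obtain ⟨c0, hc0, hlam0eq⟩ := hlam0Q
        have hrdot_comb : ∀ (u : Fin m → ℚ) (d : Fin (sG pc) → ℝ),
            rdot u (∑ a', d a' • cQ (vG pc a')) = ∑ a', d a' * rdot u (cQ (vG pc a')) := by
          intro u d
          rw [rdot_sum]
          exact Finset.sum_congr rfl fun a' _ => rdot_smul u (d a') _
        obtain ⟨c', hc'0, hc'pos⟩ := rat_approx_pos
          (κ := {j // j ∈ pc.2.1} ⊕ {k // k ∈ pc.2.2.1ᶜ})
          (Sum.elim (fun (j : {j // j ∈ pc.2.1}) (a' : Fin (sG pc)) =>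
              rdot (ArQ j.1) (cQ (vG pc a')))
            (fun (k : {k // k ∈ pc.2.2.1ᶜ}) (a' : Fin (sG pc)) =>
              rdot (AzQ k.1) (cQ (vG pc a')) - rdot bQ (cQ (vG pc a'))))
          c0 hc0
          (by
            rintro (⟨j, hj⟩ | ⟨k, hk⟩)
            · have h1 : ∑ a', (Sum.elim (fun (j : {j // j ∈ pc.2.1}) (a' : Fin (sG pc)) =>
                    rdot (ArQ j.1) (cQ (vG pc a')))
                  (fun (k : {k // k ∈ pc.2.2.1ᶜ}) (a' : Fin (sG pc)) =>
                    rdot (AzQ k.1) (cQ (vG pc a')) - rdot bQ (cQ (vG pc a')))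
                  (Sum.inl ⟨j, hj⟩) a') * c0 a' = rdot (ArQ j) lam0 := by
                rw [hlam0eq, hrdot_comb]
                exact Finset.sum_congr rfl fun a' _ => by simp [mul_comm]
              rw [h1]
              exact hl03 j hj
            · have hk' : k ∉ pc.2.2.1 := Finset.mem_compl.mp hk
              have h1 : ∑ a', (Sum.elim (fun (j : {j // j ∈ pc.2.1}) (a' : Fin (sG pc)) =>
                    rdot (ArQ j.1) (cQ (vG pc a')))
                  (fun (k : {k // k ∈ pc.2.2.1ᶜ}) (a' : Fin (sG pc)) =>
                    rdot (AzQ k.1) (cQ (vG pc a')) - rdot bQ (cQ (vG pc a')))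
                  (Sum.inr ⟨k, hk⟩) a') * c0 a'
                  = rdot (AzQ k) lam0 - rdot bQ lam0 := by
                rw [hlam0eq, hrdot_comb, hrdot_comb, ← Finset.sum_sub_distrib]
                exact Finset.sum_congr rfl fun a' _ => by simp; ring
              rw [h1]
              have := hl07 k hk'
              linarith)
        set lamQ : Fin m → ℚ := ∑ a', c' a' • vG pc a' with hlamQdef
        have hlamQ_cast : cQ lamQ = ∑ a', ((c' a' : ℚ) : ℝ) • cQ (vG pc a') := by
          funext i
          rw [hlamQdef]
          rw [show cQ (∑ a', c' a' • vG pc a') i = ((∑ a', c' a' • vG pc a') i : ℝ) from rfl]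
          rw [Finset.sum_apply, Finset.sum_apply]
          push_cast
          exact Finset.sum_congr rfl fun a' _ => by simp [cQ]
        have hlamQmem : ∀ u', rdot (rows pc u') (cQ lamQ) ≤ 0 := by
          have h1 : cQ lamQ ∈ coneOf (fun a' => cQ (vG pc a')) :=
            ⟨fun a' => ((c' a' : ℚ) : ℝ), fun a' => by dsimp only; exact_mod_cast hc'0 a',
              hlamQ_cast⟩
          rw [← hG pc] at h1
          exact h1
        obtain ⟨hp1, hp2, hp3, hp4, hp5, hp6, hp7, hp8⟩ := (hQiff pc (cQ lamQ)).mp hlamQmem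
        have hstrict1 : ∀ j ∈ pc.2.1, 0 < rdot (ArQ j) (cQ lamQ) := by
          intro j hj
          have h1 := hc'pos (Sum.inl ⟨j, hj⟩)
          have h2 : ∑ a', (Sum.elim (fun (j : {j // j ∈ pc.2.1}) (a' : Fin (sG pc)) =>
                rdot (ArQ j.1) (cQ (vG pc a')))
              (fun (k : {k // k ∈ pc.2.2.1ᶜ}) (a' : Fin (sG pc)) =>
                rdot (AzQ k.1) (cQ (vG pc a')) - rdot bQ (cQ (vG pc a')))
              (Sum.inl ⟨j, hj⟩) a') * ((c' a' : ℚ) : ℝ) = rdot (ArQ j) (cQ lamQ) := by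
            rw [hlamQ_cast, hrdot_comb]
            exact Finset.sum_congr rfl fun a' _ => by simp [mul_comm]
          rw [h2] at h1
          exact h1
        have hstrict2 : ∀ k ∉ pc.2.2.1, rdot bQ (cQ lamQ) < rdot (AzQ k) (cQ lamQ) := by
          intro k hk
          have h1 := hc'pos (Sum.inr ⟨k, Finset.mem_compl.mpr hk⟩)
          have h2 : ∑ a', (Sum.elim (fun (j : {j // j ∈ pc.2.1}) (a' : Fin (sG pc)) =>
                rdot (ArQ j.1) (cQ (vG pc a')))
              (fun (k : {k // k ∈ pc.2.2.1ᶜ}) (a' : Fin (sG pc)) =>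
                rdot (AzQ k.1) (cQ (vG pc a')) - rdot bQ (cQ (vG pc a')))
              (Sum.inr ⟨k, Finset.mem_compl.mpr hk⟩) a') * ((c' a' : ℚ) : ℝ)
              = rdot (AzQ k) (cQ lamQ) - rdot bQ (cQ lamQ) := by
            rw [hlamQ_cast, hrdot_comb, hrdot_comb, ← Finset.sum_sub_distrib]
            exact Finset.sum_congr rfl fun a' _ => by simp; ring
          rw [h2] at h1
          linarith
        set cg : Fin n → ℝ := fun tn => ∑ i, (vG pc a i : ℝ) * (A i tn : ℝ) with hcg
        set cl : Fin n → ℝ := fun tn => ∑ i, ((lamQ i : ℚ) : ℝ) * (A i tn : ℝ) with hcl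
        set zb : Fin n → ℝ := coeZR (eK pc.2.2.2) with hzb
        set Rg : ℝ := (∑ tn, cg tn * x tn) - (∑ tn, cg tn * zb tn) with hRgdef
        set Rl : ℝ := (∑ tn, cl tn * x tn) - (∑ tn, cl tn * zb tn) with hRldef
        have hmain : ∀ t : ℚ, 0 < t → Rg ≤ (t : ℝ) * (-Rl) := by
          intro t ht
          have htR : (0:ℝ) < (t : ℝ) := by exact_mod_cast ht
          set μ : Fin m → ℚ := vG pc a + t • lamQ with hμdef
          have hμcast : cQ μ = cQ (vG pc a) + ((t : ℚ) : ℝ) • cQ lamQ := by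
            rw [hμdef, cQ_add, cQ_smul]
          obtain ⟨N, hNpos, hNz⟩ := exists_int_scale (fun tn => ∑ i, μ i * (A i tn : ℚ))
          choose αZ hαZ using hNz
          have hNR : (0:ℝ) < (N : ℝ) := by exact_mod_cast hNpos
          have e1 : ∀ u : Fin m → ℚ, rdot u (cQ μ)
              = rdot u (cQ (vG pc a)) + (t : ℝ) * rdot u (cQ lamQ) := by
            intro u
            rw [hμcast, rdot_add, rdot_smul]
          have e1p : ∀ i, cQ μ i = cQ (vG pc a) i + (t : ℝ) * cQ lamQ i := by
            intro i
            have h0 := congrFun hμcast i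
            simpa using h0
          have hμ1 : ∀ i, 0 ≤ cQ μ i := fun i => by
            rw [e1p i]
            have h1 := hg1 i
            have h2 := hp1 i
            positivity
          have hμL : Lmem pc (cQ μ) := by
            rw [hLmem]
            refine ⟨hμ1, ?_, ?_, ?_, ?_, ?_, ?_, ?_⟩
            · intro i hi; rw [e1p i, hg2 i hi, hp2 i hi]; ring
            · intro j hj
              rw [e1]
              have h1 := hg3 j hj
              have h2 := mul_pos htR (hstrict1 j hj)
              linarith
            · intro j hj
              rw [e1]
              have h2 := mul_nonpos_of_nonneg_of_nonpos htR.le (hp4 j hj)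
              linarith [hg4 j hj]
            · intro j hj
              rw [e1, e1]
              have h2 := mul_le_mul_of_nonneg_left (hp5 j hj) htR.le
              have h1 := hg5 j hj
              nlinarith
            · intro k hk
              rw [e1, e1]
              have h2 := mul_le_mul_of_nonneg_left (hp6 k hk) htR.le
              linarith [hg6 k hk]
            · intro k hk
              rw [e1, e1]
              have h2 := mul_lt_mul_of_pos_left (hstrict2 k hk) htR
              linarith [hg7 k hk]
            · intro k hk
              rw [e1, e1]
              have h2 := mul_le_mul_of_nonneg_left (hp8 k hk) htR.le
              linarith [hg8 k hk]
          obtain ⟨hm1, hm2, hm3, hm4, hm5, hm6, hm7, hm8⟩ := by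
            rw [hLmem] at hμL; exact hμL
          set lamR : Fin m → ℝ := (N : ℝ) • cQ μ with hlamRdef
          have e2 : ∀ u : Fin m → ℚ, rdot u lamR = (N : ℝ) * rdot u (cQ μ) := by
            intro u
            rw [hlamRdef, rdot_smul]
          have e2p : ∀ i, lamR i = (N : ℝ) * cQ μ i := by
            intro i
            rw [hlamRdef]
            simp
          have e3p : ∀ i, lamR i
              = (N : ℝ) * (cQ (vG pc a) i + (t : ℝ) * cQ lamQ i) := by
            intro i
            rw [e2p i, e1p i]
          have hlamR0 : ∀ i, 0 ≤ lamR i := by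
            intro i
            rw [e2p i]
            exact mul_nonneg hNR.le (hμ1 i)
          have hR2 : ∀ i ∉ pc.1, lamR i = 0 := by
            intro i hi
            rw [e2p i, hm2 i hi]
            ring
          have hR3 : ∀ j ∈ pc.2.1, 0 < rdot (ArQ j) lamR := by
            intro j hj
            rw [e2]
            exact mul_pos hNR (hm3 j hj)
          have hR4 : ∀ j ∉ pc.2.1, rdot (ArQ j) lamR ≤ 0 := by
            intro j hj
            rw [e2]
            exact mul_nonpos_of_nonneg_of_nonpos hNR.le (hm4 j hj)
          have hR5 : ∀ j ∈ pc.2.1, rdot bQ lamR ≤ (Mstar : ℝ) * rdot (ArQ j) lamR := by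
            intro j hj
            rw [e2, e2]
            calc (N:ℝ) * rdot bQ (cQ μ)
                ≤ (N:ℝ) * ((Mstar : ℝ) * rdot (ArQ j) (cQ μ)) :=
                  mul_le_mul_of_nonneg_left (hm5 j hj) hNR.le
            _ = (Mstar : ℝ) * ((N:ℝ) * rdot (ArQ j) (cQ μ)) := by ring
          have hR6 : ∀ k ∈ pc.2.2.1, rdot (AzQ k) lamR ≤ rdot bQ lamR := by
            intro k hk
            rw [e2, e2]
            exact mul_le_mul_of_nonneg_left (hm6 k hk) hNR.le
          have hR7 : ∀ k ∉ pc.2.2.1, rdot bQ lamR < rdot (AzQ k) lamR := by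
            intro k hk
            rw [e2, e2]
            exact mul_lt_mul_of_pos_left (hm7 k hk) hNR
          have hR8 : ∀ k ∈ pc.2.2.1, rdot (AzQ k) lamR ≤ rdot (AzQ pc.2.2.2) lamR := by
            intro k hk
            rw [e2, e2]
            exact mul_le_mul_of_nonneg_left (hm8 k hk) hNR.le
          have halphaZ : ∀ tn, (αZ tn : ℝ) = ∑ i, lamR i * (A i tn : ℝ) := by
            intro tn
            have h1 : ((αZ tn : ℤ) : ℝ) = ((N : ℚ) : ℝ) * ((∑ i, μ i * (A i tn : ℚ) : ℚ) : ℝ) := by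
              have := hαZ tn
              exact_mod_cast congrArg (fun q : ℚ => (q : ℝ)) this
            rw [h1]
            push_cast
            rw [Finset.mul_sum]
            refine Finset.sum_congr rfl fun i _ => ?_
            rw [e2p i, show cQ μ i = ((μ i : ℚ) : ℝ) from rfl]
            ring
          have htight : ∀ i, lamR i ≠ 0 → ∑ j, (A i j : ℝ) * xh j = (b i : ℝ) := by
            intro i hne
            by_cases hiI : i ∈ pc.1
            · exact hxht i hiI
            · exact absurd (hR2 i hiI) hne
          have hPiLe := build_omega A b αZ lamR hlamR0 halphaZ xh hxhP' htight
          have hΩmem : ((αZ, ∑ i, lamR i * (b i : ℝ)) : (Fin n → ℤ) × ℝ) ∈ Ω := by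
            rw [hΩdef, Set.mem_sep_iff]
            constructor
            · rw [hPdef]
              exact hPiLe
            · intro j hjpos
              have hcast := hArcast αZ lamR halphaZ j
              have hposR : (0:ℝ) < rdot (ArQ j) lamR := by
                rw [← hcast]
                exact_mod_cast hjpos
              have hjJ : j ∈ pc.2.1 := by
                by_contra hjJ
                exact absurd hposR (not_lt.mpr (hR4 j hjJ))
              have h5 := hR5 j hjJ
              dsimp only
              rw [div_le_iff₀ (by rw [hcast]; exact hposR)]
              calc (∑ i, lamR i * (b i : ℝ)) = rdot bQ lamR := (hrdot_bQ lamR).symm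
              _ ≤ (Mstar : ℝ) * rdot (ArQ j) lamR := h5
              _ = (Mstar : ℝ) * ((∑ k, αZ k * rs j k : ℤ) : ℝ) := by rw [hcast]
          have hxcut : x ∈ cutLe S αZ (∑ i, lamR i * (b i : ℝ)) := by
            have h1 : closLe S Ω ⊆ cutLe S αZ (∑ i, lamR i * (b i : ℝ)) :=
              Set.biInter_subset_of_mem hΩmem
            exact h1 hx
          have hcf := cut_formula vs rs S hSint hSdec hsub Mstar hMstar A b hAe hAr eK
            (fun k => (heKmem k).1) heKsurj pc.2.1 pc.2.2.1 pc.2.2.2 hkb αZ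
            (∑ i, lamR i * (b i : ℝ)) lamR hlamR0 halphaZ rfl
            (fun j hj => by rw [← hrdot_ArQ]; exact hR3 j hj)
            (fun j hj => by rw [← hrdot_ArQ]; exact hR4 j hj)
            (fun j hj => by rw [← hrdot_ArQ, ← hrdot_bQ]; exact hR5 j hj)
            (fun k hk => by rw [← hrdot_AzQ, ← hrdot_bQ]; exact hR6 k hk)
            (fun k hk => by rw [← hrdot_AzQ, ← hrdot_bQ]; exact hR7 k hk)
            (fun k hk => by rw [← hrdot_AzQ, ← hrdot_AzQ]; exact hR8 k hk)
          rw [hcf.1, Set.mem_setOf_eq] at hxcut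
          -- decompose the dot products
          have hswap : ∀ (w : Fin m → ℝ) (y : Fin n → ℝ),
              ∑ i, w i * (∑ tn, (A i tn : ℝ) * y tn)
                = ∑ tn, (∑ i, w i * (A i tn : ℝ)) * y tn := by
            intro w y
            calc ∑ i, w i * (∑ tn, (A i tn : ℝ) * y tn)
                = ∑ i, ∑ tn, w i * ((A i tn : ℝ) * y tn) :=
                  Finset.sum_congr rfl fun i _ => Finset.mul_sum _ _ _
            _ = ∑ tn, ∑ i, w i * ((A i tn : ℝ) * y tn) := Finset.sum_comm
            _ = ∑ tn, (∑ i, w i * (A i tn : ℝ)) * y tn := by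
                  refine Finset.sum_congr rfl fun tn _ => ?_
                  rw [Finset.sum_mul]
                  exact Finset.sum_congr rfl fun i _ => by ring
          have hdec : ∀ y : Fin n → ℝ, dotIR αZ y
              = (N : ℝ) * ((∑ tn, cg tn * y tn) + (t : ℝ) * (∑ tn, cl tn * y tn)) := by
            intro y
            rw [dot_swap A lamR αZ halphaZ y]
            have h1 : ∀ i, lamR i * (∑ tn, (A i tn : ℝ) * y tn)
                = (N:ℝ) * ((cQ (vG pc a) i) * (∑ tn, (A i tn : ℝ) * y tn)
                  + (t:ℝ) * ((cQ lamQ i) * (∑ tn, (A i tn : ℝ) * y tn))) := by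
              intro i
              rw [e3p i]
              ring
            rw [Finset.sum_congr rfl fun i (_ : i ∈ Finset.univ) => h1 i]
            rw [← Finset.mul_sum]
            congr 1
            rw [Finset.sum_add_distrib]
            congr 1
            · rw [hswap (fun i => cQ (vG pc a) i) y]
              rw [hcg]
              rfl
            · rw [← Finset.mul_sum]
              congr 1
              rw [hswap (fun i => cQ lamQ i) y]
              rw [hcl]
              rfl
          rw [hdec x, hdec zb] at hxcut
          have h2 : (∑ tn, cg tn * x tn) + (t : ℝ) * (∑ tn, cl tn * x tn)
              ≤ (∑ tn, cg tn * zb tn) + (t : ℝ) * (∑ tn, cl tn * zb tn) :=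
            le_of_mul_le_mul_left (by linarith [hxcut]) hNR
          rw [hRgdef, hRldef]
          nlinarith
        have hRg0 : Rg ≤ 0 := le_zero_of_forall_rat Rg (-Rl) hmain
        rw [hCrow, hdrhs]
        simp only [if_pos hv]
        have hcast1 : ∀ tn : Fin n, (((∑ i, vG pc a i * (A i tn : ℚ)) : ℚ) : ℝ) = cg tn := by
          intro tn
          rw [hcg]
          push_cast
          rfl
        have hcast2 : ((∑ tn, (∑ i, vG pc a i * (A i tn : ℚ)) * (eK pc.2.2.2 tn : ℚ) : ℚ) : ℝ)
            = ∑ tn, cg tn * zb tn := by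
          rw [hcg, hzb]
          push_cast
          refine Finset.sum_congr rfl fun tn _ => ?_
          simp [coeZR]
        rw [Finset.sum_congr rfl fun tn (_ : tn ∈ Finset.univ) => by rw [hcast1 tn], hcast2]
        rw [hRgdef] at hRg0
        linarith
    · intro hx
      rw [closLe, Set.mem_iInter₂]
      intro p hpΩ
      have hpΩ' := hpΩ
      rw [hΩdef, Set.mem_sep_iff] at hpΩ'
      obtain ⟨hpPi, hsep⟩ := hpΩ'
      obtain ⟨lam, hlam0, hα, hβ, hGr⟩ := hpPi
      obtain ⟨z₀, hz₀S, hz₀β⟩ := hemp p hpΩ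
      have hβ' : p.2 = rdot bQ lam := by rw [hrdot_bQ]; exact hβ
      set I : Finset (Fin m) := Finset.univ.filter (fun i => lam i ≠ 0) with hI
      set J : Finset (Fin h) := Finset.univ.filter (fun j => 0 < rdot (ArQ j) lam) with hJ
      set Tk : Finset (Fin K) :=
        Finset.univ.filter (fun k => rdot (AzQ k) lam ≤ rdot bQ lam) with hTk
      have hicpt' : ∀ j ∈ J, rdot bQ lam ≤ (Mstar : ℝ) * rdot (ArQ j) lam := by
        intro j hj
        rw [hJ, Finset.mem_filter] at hj
        have hpos := hj.2
        rw [← hArcast p.1 lam hα j] at hpos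
        have hposZ : (0:ℤ) < (∑ k, p.1 k * rs j k) := by exact_mod_cast hpos
        have hdiv := hsep j hposZ
        rw [div_le_iff₀ (by exact_mod_cast hposZ :
          (0:ℝ) < ((∑ k, p.1 k * rs j k : ℤ) : ℝ))] at hdiv
        calc rdot bQ lam = p.2 := hβ'.symm
        _ ≤ (Mstar : ℝ) * ((∑ k, p.1 k * rs j k : ℤ) : ℝ) := hdiv
        _ = (Mstar : ℝ) * rdot (ArQ j) lam := by rw [hArcast p.1 lam hα j]
      have hdotAr : ∀ j, dotIR p.1 (coeZR (rs j)) = rdot (ArQ j) lam := by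
        intro j
        rw [← hArcast p.1 lam hα j, dotIR]
        push_cast
        simp [coeZR]
      have hαe : ∀ k : Fin n, (k : ℕ) < n - n₂ → (0:ℝ) ≤ (p.1 k : ℝ) := by
        intro k hk
        rw [hα k]
        exact Finset.sum_nonneg fun i _ =>
          mul_nonneg (hlam0 i) (by exact_mod_cast hAe i k hk)
      have hαr0 : ∀ j, 0 ≤ dotIR p.1 (coeZR (rs j)) := by
        intro j
        rw [hdotAr j, hrdot_ArQ]
        exact Finset.sum_nonneg fun i _ =>
          mul_nonneg (hlam0 i) (by exact_mod_cast hAr i j)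
      have hicptD : ∀ j, 0 < dotIR p.1 (coeZR (rs j)) →
          p.2 ≤ (Mstar : ℝ) * dotIR p.1 (coeZR (rs j)) := by
        intro j hj
        have hjJ : j ∈ J := by
          rw [hJ, Finset.mem_filter]
          exact ⟨Finset.mem_univ _, by rwa [← hdotAr j]⟩
        have h1 := hicpt' j hjJ
        rw [hdotAr j, hβ']
        exact h1
      obtain ⟨z₀', hz₀'S, hz₀'bd, hz₀'val⟩ :=
        truncation vs rs S hSint hSdec hsub Mstar hMstar p.1 p.2 hαe hαr0 hicptD z₀ hz₀S hz₀β
      obtain ⟨k₀, hk₀⟩ := heKsurj z₀' hz₀'S hz₀'bd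
      have hk₀Tk : k₀ ∈ Tk := by
        rw [hTk, Finset.mem_filter]
        refine ⟨Finset.mem_univ _, ?_⟩
        rw [← hAzcast p.1 lam hα k₀, hk₀, hz₀'val, ← hβ']
        exact hz₀β
      obtain ⟨kb, hkbTk, hkbmax⟩ :=
        Finset.exists_max_image Tk (fun k => rdot (AzQ k) lam) ⟨k₀, hk₀Tk⟩
      have hLmemp : Lmem (I, J, Tk, kb) lam := by
        rw [hLmem]
        refine ⟨hlam0, ?_, ?_, ?_, ?_, ?_, ?_, ?_⟩
        · intro i hi
          by_contra hne
          exact hi (Finset.mem_filter.mpr ⟨Finset.mem_univ _, hne⟩)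
        · intro j hj
          exact (Finset.mem_filter.mp hj).2
        · intro j hj
          exact not_lt.mp fun hpos => hj (Finset.mem_filter.mpr ⟨Finset.mem_univ _, hpos⟩)
        · exact hicpt'
        · intro k hk
          exact (Finset.mem_filter.mp hk).2
        · intro k hk
          have h1 : ¬(rdot (AzQ k) lam ≤ rdot bQ lam) :=
            fun hle => hk (Finset.mem_filter.mpr ⟨Finset.mem_univ _, hle⟩)
          exact not_le.mp h1
        · intro k hk
          exact hkbmax k hk
      have hValidp : Valid (I, J, Tk, kb) := by
        rw [hValid]
        refine ⟨hkbTk, ?_, ⟨lam, hLmemp⟩⟩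
        obtain ⟨xh, hxhP, hxhval⟩ := hGr.1
        refine ⟨xh, hxhP, ?_⟩
        have hxhP' := hxhP
        rw [hPdef] at hxhP'
        simp only [Set.mem_setOf_eq] at hxhP'
        have hterms : ∀ i, 0 ≤ lam i * ((b i : ℝ) - ∑ j, (A i j : ℝ) * xh j) := by
          intro i
          refine mul_nonneg (hlam0 i) ?_
          linarith [hxhP' i]
        have hsum0 : ∑ i, lam i * ((b i : ℝ) - ∑ j, (A i j : ℝ) * xh j) = 0 := by
          have h1 : dotIR p.1 xh = ∑ i, lam i * (∑ j, (A i j : ℝ) * xh j) :=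
            dot_swap A lam p.1 hα xh
          rw [Finset.sum_congr rfl fun i (_ : i ∈ Finset.univ) =>
            mul_sub (lam i) ((b i : ℝ)) (∑ j, (A i j : ℝ) * xh j)]
          rw [Finset.sum_sub_distrib, ← h1, hxhval, hβ]
          ring
        intro i hiI
        rw [hI, Finset.mem_filter] at hiI
        have h2 := (Finset.sum_eq_zero_iff_of_nonneg
          (fun i _ => hterms i)).mp hsum0 i (Finset.mem_univ i)
        rcases mul_eq_zero.mp h2 with hcase | hcase
        · exact absurd hcase hiI.2
        · linarith
      have hcf := cut_formula vs rs S hSint hSdec hsub Mstar hMstar A b hAe hAr eK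
        (fun k => (heKmem k).1) heKsurj J Tk kb hkbTk p.1 p.2 lam hlam0 hα hβ
        (fun j hj => by rw [← hrdot_ArQ]; exact (Finset.mem_filter.mp hj).2)
        (fun j hj => by
          rw [← hrdot_ArQ]
          exact not_lt.mp fun hpos => hj (Finset.mem_filter.mpr ⟨Finset.mem_univ _, hpos⟩))
        (fun j hj => by rw [← hrdot_ArQ, ← hrdot_bQ]; exact hicpt' j hj)
        (fun k hk => by rw [← hrdot_AzQ, ← hrdot_bQ]; exact (Finset.mem_filter.mp hk).2)
        (fun k hk => by
          rw [← hrdot_AzQ, ← hrdot_bQ]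
          exact not_le.mp fun hle => hk (Finset.mem_filter.mpr ⟨Finset.mem_univ _, hle⟩))
        (fun k hk => by rw [← hrdot_AzQ, ← hrdot_AzQ]; exact hkbmax k hk)
      rw [hcf.1, Set.mem_setOf_eq]
      -- express lam as a conic combination of the generators
      have hlamC : lam ∈ coneOf (fun a => cQ (vG (I, J, Tk, kb) a)) := by
        rw [← hG (I, J, Tk, kb)]
        exact hLsubQ _ lam hLmemp
      obtain ⟨c, hc, hlameq⟩ := hlamC
      have hlam_i : ∀ i, lam i = ∑ a, c a * (vG (I, J, Tk, kb) a i : ℝ) := by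
        intro i
        have h1 := congrFun hlameq i
        rw [Finset.sum_apply] at h1
        rw [h1]
        exact Finset.sum_congr rfl fun a _ => by simp [cQ]
      have hswap : ∀ (w : Fin m → ℝ) (y : Fin n → ℝ),
          ∑ i, w i * (∑ t, (A i t : ℝ) * y t) = ∑ t, (∑ i, w i * (A i t : ℝ)) * y t := by
        intro w y
        calc ∑ i, w i * (∑ t, (A i t : ℝ) * y t)
            = ∑ i, ∑ t, w i * ((A i t : ℝ) * y t) :=
              Finset.sum_congr rfl fun i _ => Finset.mul_sum _ _ _
        _ = ∑ t, ∑ i, w i * ((A i t : ℝ) * y t) := Finset.sum_comm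
        _ = ∑ t, (∑ i, w i * (A i t : ℝ)) * y t := by
              refine Finset.sum_congr rfl fun t _ => ?_
              rw [Finset.sum_mul]
              exact Finset.sum_congr rfl fun i _ => by ring
      have hFa : ∀ y : Fin n → ℝ, dotIR p.1 y
          = ∑ a, c a * (∑ t, (∑ i, (vG (I, J, Tk, kb) a i : ℝ) * (A i t : ℝ)) * y t) := by
        intro y
        rw [dot_swap A lam p.1 hα y]
        calc ∑ i, lam i * (∑ t, (A i t : ℝ) * y t)
            = ∑ i, (∑ a, c a * (vG (I, J, Tk, kb) a i : ℝ)) * (∑ t, (A i t : ℝ) * y t) :=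
              Finset.sum_congr rfl fun i _ => by rw [← hlam_i i]
        _ = ∑ i, ∑ a, c a * (vG (I, J, Tk, kb) a i : ℝ) * (∑ t, (A i t : ℝ) * y t) :=
              Finset.sum_congr rfl fun i _ => Finset.sum_mul _ _ _
        _ = ∑ a, ∑ i, c a * (vG (I, J, Tk, kb) a i : ℝ) * (∑ t, (A i t : ℝ) * y t) :=
              Finset.sum_comm
        _ = ∑ a, c a * (∑ t, (∑ i, (vG (I, J, Tk, kb) a i : ℝ) * (A i t : ℝ)) * y t) := by
              refine Finset.sum_congr rfl fun a _ => ?_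
              rw [← hswap (fun i => (vG (I, J, Tk, kb) a i : ℝ)) y, Finset.mul_sum]
              exact Finset.sum_congr rfl fun i _ => by ring
      have hxrow : ∀ a : Fin (sG (I, J, Tk, kb)),
          (∑ t, (∑ i, (vG (I, J, Tk, kb) a i : ℝ) * (A i t : ℝ)) * x t)
            ≤ ∑ t, (∑ i, (vG (I, J, Tk, kb) a i : ℝ) * (A i t : ℝ)) * (coeZR (eK kb) t) := by
        intro a
        have h1 := hx ⟨(I, J, Tk, kb), a⟩
        rw [hCrow, hdrhs] at h1
        simp only [if_pos hValidp] at h1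
        have hcast1 : ∀ t : Fin n, (((∑ i, vG (I, J, Tk, kb) a i * (A i t : ℚ)) : ℚ) : ℝ)
            = ∑ i, (vG (I, J, Tk, kb) a i : ℝ) * (A i t : ℝ) := by
          intro t
          push_cast
          rfl
        have hcast2 : ((∑ t, (∑ i, vG (I, J, Tk, kb) a i * (A i t : ℚ))
              * (eK kb t : ℚ) : ℚ) : ℝ)
            = ∑ t, (∑ i, (vG (I, J, Tk, kb) a i : ℝ) * (A i t : ℝ)) * (coeZR (eK kb) t) := by
          push_cast
          simp [coeZR]
        rw [Finset.sum_congr rfl fun t (_ : t ∈ Finset.univ) => by rw [hcast1 t], hcast2] at h1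
        exact h1
      rw [hFa x, hFa (coeZR (eK kb))]
      exact Finset.sum_le_sum fun a _ =>
        mul_le_mul_of_nonneg_left (hxrow a) (hc a)
end

section
/- Let S ⊆ ℤ^n be nonempty with conv(S) ∩ ℤ^n = S and conv(S) = conv{v^1,…,v^g} + cone{r^1,…,r^h} for integer vectors v^i, r^j, where cone{r^1,…,r^h} is pointed, cone{r^1,…,r^h} ⊆ {0} × ℝ^{n_2}, n_1 = n − n_2, and conv(S) ⊆ cone{e^1,…,e^{n_1}, r^1,…,r^h}. Let S_0 := (conv{v^1,…,v^g} + lin{r^1,…,r^h}) ∩ ℤ^n, where lin denotes the linear hull. If P ⊆ conv(S) is a nonempty rational polyhedron, then P_S = P_{S_0} ∩ P_{S,Π^+} ∩ P_{S,Π^−}, where Π^+ := {(α,β) ∈ Π_P : αr^i ≥ 0 for all i ∈ {1,…,h}} and Π^− := {(α,β) ∈ Π_P : αr^i ≤ 0 for all i ∈ {1,…,h}}. -/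
open scoped Classical Pointwise

private lemma dotIR_eq_int' {n : ℕ} (a z : Fin n → ℤ) :
    dotIR a (coeZR z) = ((∑ i, a i * z i : ℤ) : ℝ) := by
  simp [dotIR, coeZR]

private lemma dotIR_add' {n : ℕ} (a : Fin n → ℤ) (x y : Fin n → ℝ) :
    dotIR a (x + y) = dotIR a x + dotIR a y := by
  simp [dotIR, mul_add, Finset.sum_add_distrib]

private lemma dotIR_sum' {n h : ℕ} (a : Fin n → ℤ) (c : Fin h → ℝ) (f : Fin h → Fin n → ℝ) :
    dotIR a (∑ j, c j • f j) = ∑ j, c j * dotIR a (f j) := by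
  simp only [dotIR, Finset.sum_apply, Pi.smul_apply, smul_eq_mul, Finset.mul_sum]
  rw [Finset.sum_comm]
  exact Finset.sum_congr rfl fun j _ => Finset.sum_congr rfl fun i _ => by ring

private lemma cutLe_subset_of_subset' {n : ℕ} {S S₀ : Set (Fin n → ℤ)} (hsub : S ⊆ S₀)
    (a : Fin n → ℤ) (β : ℝ) : cutLe S a β ⊆ cutLe S₀ a β := by
  intro x hx
  unfold cutLe at hx ⊢
  split at hx
  · rename_i hc
    obtain ⟨z, hzS, hzle⟩ := hc
    rw [if_pos ⟨z, hsub hzS, hzle⟩]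
    have hmono : floorS S a β ≤ floorS S₀ a β := by
      unfold floorS
      apply csSup_le_csSup
      · exact ⟨β, by rintro t ⟨z', _, rfl, hle⟩; exact hle⟩
      · exact ⟨_, z, hzS, rfl, hzle⟩
      · rintro t ⟨z', hz', ht, hle⟩; exact ⟨z', hsub hz', ht, hle⟩
    exact le_trans hx hmono
  · exact absurd hx (Set.notMem_empty x)

private lemma cutLe_eq_of_transfer' {n : ℕ} {S S₀ : Set (Fin n → ℤ)} (hsub : S ⊆ S₀)
    (a : Fin n → ℤ)
    (htr : ∀ z ∈ S₀, ∃ z' ∈ S, dotIR a (coeZR z') = dotIR a (coeZR z)) (β : ℝ) :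
    cutLe S₀ a β = cutLe S a β := by
  have hset : {t : ℝ | ∃ z ∈ S₀, dotIR a (coeZR z) = t ∧ t ≤ β}
      = {t : ℝ | ∃ z ∈ S, dotIR a (coeZR z) = t ∧ t ≤ β} := by
    ext t; constructor
    · rintro ⟨z, hz, rfl, hle⟩
      obtain ⟨z', hz', he⟩ := htr z hz
      exact ⟨z', hz', he, hle⟩
    · rintro ⟨z, hz, rfl, hle⟩; exact ⟨z, hsub hz, rfl, hle⟩
  have hcond : (∃ z ∈ S₀, dotIR a (coeZR z) ≤ β) = (∃ z ∈ S, dotIR a (coeZR z) ≤ β) := by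
    apply propext; constructor
    · rintro ⟨z, hz, hle⟩
      obtain ⟨z', hz', he⟩ := htr z hz
      exact ⟨z', hz', he ▸ hle⟩
    · rintro ⟨z, hz, hle⟩; exact ⟨z, hsub hz, hle⟩
  unfold cutLe floorS
  rw [hset, hcond]

private lemma transfer' {n g h : ℕ} (vs : Fin g → Fin n → ℤ) (rs : Fin h → Fin n → ℤ)
    (S : Set (Fin n → ℤ))
    (hSint : {z : Fin n → ℤ | coeZR z ∈ convexHull ℝ (coeZR '' S)} = S)
    (hSdec : convexHull ℝ (coeZR '' S)
        = convexHull ℝ (Set.range (fun i => coeZR (vs i))) + coneOf (fun j => coeZR (rs j)))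
    (a : Fin n → ℤ) (jp jm : Fin h)
    (hp : 0 < ∑ i, a i * rs jp i) (hm : ∑ i, a i * rs jm i < 0)
    (z : Fin n → ℤ)
    (hz : coeZR z ∈ convexHull ℝ (Set.range (fun i => coeZR (vs i)))
        + {x | ∃ c : Fin h → ℝ, x = ∑ j, c j • coeZR (rs j)}) :
    ∃ z' ∈ S, dotIR a (coeZR z') = dotIR a (coeZR z) := by
  rw [Set.mem_add] at hz
  obtain ⟨v, hv, wvec, ⟨c, rfl⟩, hvw⟩ := hz
  set d : Fin h → ℤ := fun j => ∑ i, a i * rs j i with hd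
  set s : ℤ := ∑ j, d j with hs
  obtain ⟨K, hK⟩ := exists_nat_ge (Finset.univ.sup' ⟨jp, Finset.mem_univ jp⟩ (fun j => -c j))
  have hKj : ∀ j, -c j ≤ (K : ℝ) := fun j =>
    le_trans (Finset.le_sup' (fun j => -c j) (Finset.mem_univ j)) hK
  set u : ℤ := if 0 ≤ s then 0 else (-(d jm)) * (K : ℤ) * (-s) with hu
  set w' : ℤ := if 0 ≤ s then d jp * (K : ℤ) * s else 0 with hw'
  set N : Fin h → ℤ := fun j =>
    d jp * (-(d jm)) * (K : ℤ) + (if j = jp then u else 0) + (if j = jm then w' else 0) with hN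
  have hp1 : 1 ≤ d jp := hp
  have hm1 : 1 ≤ -(d jm) := by
    have e : d jm = ∑ i, a i * rs jm i := rfl
    omega
  have hK0 : (0 : ℤ) ≤ (K : ℤ) := Int.ofNat_nonneg K
  have hu0 : 0 ≤ u := by
    rw [hu]; split
    · exact le_refl 0
    · rename_i hns
      have : 0 ≤ -s := by omega
      exact mul_nonneg (mul_nonneg (by omega) hK0) this
  have hw0 : 0 ≤ w' := by
    rw [hw']; split
    · rename_i hss; exact mul_nonneg (mul_nonneg (by omega) hK0) hss
    · exact le_refl 0
  have hNge : ∀ j, (K : ℤ) ≤ N j := by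
    intro j
    have hpq : (1:ℤ) ≤ d jp * (-(d jm)) :=
      one_mul (1:ℤ) ▸ mul_le_mul hp1 hm1 zero_le_one (le_trans zero_le_one hp1)
    have h1 : (K : ℤ) ≤ d jp * (-(d jm)) * (K : ℤ) := le_mul_of_one_le_left hK0 hpq
    have h2 : (0:ℤ) ≤ (if j = jp then u else 0) := by split <;> simp [hu0]
    have h3 : (0:ℤ) ≤ (if j = jm then w' else 0) := by split <;> simp [hw0]
    simp only [hN]; omega
  have hcN : ∀ j, 0 ≤ c j + (N j : ℝ) := by
    intro j
    have : (K : ℝ) ≤ (N j : ℝ) := by exact_mod_cast hNge j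
    have := hKj j
    linarith
  have hNsum : ∑ j, N j * d j = 0 := by
    have e1 : ∑ j, N j * d j
        = (∑ j, d jp * (-(d jm)) * (K : ℤ) * d j)
          + ((∑ j, (if j = jp then u * d j else 0))
          + (∑ j, (if j = jm then w' * d j else 0))) := by
      rw [← Finset.sum_add_distrib, ← Finset.sum_add_distrib]
      refine Finset.sum_congr rfl fun j _ => ?_
      simp only [hN]; split <;> split <;> ring
    rw [e1, Finset.sum_ite_eq', Finset.sum_ite_eq', ← Finset.mul_sum, ← hs]
    simp only [Finset.mem_univ, if_pos]
    rw [hu, hw']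
    split <;> ring
  refine ⟨fun i => z i + ∑ j, N j * rs j i, ?_, ?_⟩
  · have hcoe : coeZR (fun i => z i + ∑ j, N j * rs j i)
        = coeZR z + ∑ j, (N j : ℝ) • coeZR (rs j) := by
      funext i
      simp only [coeZR, Pi.add_apply, Finset.sum_apply, Pi.smul_apply, smul_eq_mul]
      push_cast; ring
    rw [← hSint]
    show coeZR _ ∈ convexHull ℝ (coeZR '' S)
    rw [hSdec, Set.mem_add]
    refine ⟨v, hv, ∑ j, (c j + (N j : ℝ)) • coeZR (rs j),
      ⟨fun j => c j + (N j : ℝ), hcN, rfl⟩, ?_⟩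
    rw [hcoe, ← hvw]
    simp only [add_smul, Finset.sum_add_distrib]
    abel
  · have hcoe : coeZR (fun i => z i + ∑ j, N j * rs j i)
        = coeZR z + ∑ j, (N j : ℝ) • coeZR (rs j) := by
      funext i
      simp only [coeZR, Pi.add_apply, Finset.sum_apply, Pi.smul_apply, smul_eq_mul]
      push_cast; ring
    rw [hcoe, dotIR_add', dotIR_sum']
    have : ∑ j, (N j : ℝ) * dotIR a (coeZR (rs j)) = ((∑ j, N j * d j : ℤ) : ℝ) := by
      rw [Int.cast_sum]
      refine Finset.sum_congr rfl fun j _ => ?_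
      rw [dotIR_eq_int', Int.cast_mul]
    rw [this, hNsum]
    norm_num

/-- With `S` in normal form and `S₀ = (conv{v¹,…,v^g} + lin{r¹,…,r^h}) ∩ ℤ^n`,
for any nonempty rational polyhedron `P ⊆ conv(S)` one has
`P_S = P_{S₀} ∩ P_{S,Π⁺} ∩ P_{S,Π⁻}`, where `Π⁺` (resp. `Π⁻`) consists of those
`(α,β) ∈ Π_P` with `αrⁱ ≥ 0` (resp. `≤ 0`) for all `i ∈ {1,…,h}`. -/
theorem scg_closure_decomposition_pointed {n n₂ g h m : ℕ}
    (vs : Fin g → Fin n → ℤ) (rs : Fin h → Fin n → ℤ)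
    (S : Set (Fin n → ℤ)) (hSne : S.Nonempty)
    (hSint : {z : Fin n → ℤ | coeZR z ∈ convexHull ℝ (coeZR '' S)} = S)
    (hSdec : convexHull ℝ (coeZR '' S)
        = convexHull ℝ (Set.range (fun i => coeZR (vs i))) + coneOf (fun j => coeZR (rs j)))
    (hptd : ∀ x ∈ coneOf (fun j => coeZR (rs j)),
        -x ∈ coneOf (fun j => coeZR (rs j)) → x = 0)
    (hzero : ∀ x ∈ coneOf (fun j => coeZR (rs j)), ∀ i : Fin n, (i : ℕ) < n - n₂ → x i = 0)
    (hsub : convexHull ℝ (coeZR '' S)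
        ⊆ coneOf (Sum.elim (unitVecs (n - n₂)) (fun j => coeZR (rs j))))
    (S₀ : Set (Fin n → ℤ))
    (hS₀ : S₀ = {z | coeZR z ∈ convexHull ℝ (Set.range (fun i => coeZR (vs i)))
        + {x | ∃ c : Fin h → ℝ, x = ∑ j, c j • coeZR (rs j)}})
    (A : Matrix (Fin m) (Fin n) ℤ) (b : Fin m → ℤ) (P : Set (Fin n → ℝ))
    (hP : P = {x | ∀ i, ∑ j, (A i j : ℝ) * x j ≤ (b i : ℝ)})
    (hPne : P.Nonempty) (hPsub : P ⊆ convexHull ℝ (coeZR '' S)) :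
    closLe S (PiLe A b P)
      = closLe S₀ (PiLe A b P)
        ∩ closLe S {p ∈ PiLe A b P | ∀ j : Fin h, 0 ≤ ∑ i, p.1 i * rs j i}
        ∩ closLe S {p ∈ PiLe A b P | ∀ j : Fin h, ∑ i, p.1 i * rs j i ≤ 0} := by
  have hsub0 : S ⊆ S₀ := by
    intro z hz
    rw [hS₀]
    have hmem : coeZR z ∈ convexHull ℝ (coeZR '' S) :=
      subset_convexHull ℝ _ ⟨z, hz, rfl⟩
    rw [hSdec, Set.mem_add] at hmem
    obtain ⟨v, hv, w, ⟨c, hc0, rfl⟩, hvw⟩ := hmem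
    exact Set.mem_add.mpr ⟨v, hv, _, ⟨c, rfl⟩, hvw⟩
  have htr : ∀ (a : Fin n → ℤ) (jp jm : Fin h),
      0 < ∑ i, a i * rs jp i → ∑ i, a i * rs jm i < 0 →
      ∀ z ∈ S₀, ∃ z' ∈ S, dotIR a (coeZR z') = dotIR a (coeZR z) := by
    intro a jp jm hjp hjm z hz
    refine transfer' vs rs S hSint hSdec a jp jm hjp hjm z ?_
    rw [hS₀] at hz
    exact hz
  unfold closLe
  apply Set.Subset.antisymm
  · intro x hx
    refine ⟨⟨?_, ?_⟩, ?_⟩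
    · exact Set.mem_iInter₂.mpr fun p hp =>
        cutLe_subset_of_subset' hsub0 p.1 p.2 (Set.mem_iInter₂.mp hx p hp)
    · exact Set.mem_iInter₂.mpr fun p hp => Set.mem_iInter₂.mp hx p hp.1
    · exact Set.mem_iInter₂.mpr fun p hp => Set.mem_iInter₂.mp hx p hp.1
  · rintro x ⟨⟨h0, hplus⟩, hminus⟩
    refine Set.mem_iInter₂.mpr fun p hp => ?_
    by_cases h1 : ∀ j : Fin h, 0 ≤ ∑ i, p.1 i * rs j i
    · exact Set.mem_iInter₂.mp hplus p ⟨hp, h1⟩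
    by_cases h2 : ∀ j : Fin h, ∑ i, p.1 i * rs j i ≤ 0
    · exact Set.mem_iInter₂.mp hminus p ⟨hp, h2⟩
    push_neg at h1 h2
    obtain ⟨jm, hjm⟩ := h1
    obtain ⟨jp, hjp⟩ := h2
    have hx0 := Set.mem_iInter₂.mp h0 p hp
    rw [cutLe_eq_of_transfer' hsub0 p.1 (htr p.1 jp jm hjp hjm) p.2] at hx0
    exact hx0
end
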